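/- arXiv:math/0611069 — 8 statements merged into one kernel-verified Lean document; each statement's English description precedes it below -/
import Mathlib

section
/- Let V be a separable reflexive real Banach space and let p ∈ [2, ∞). Let D : V → V* be monotone, hemicontinuous, satisfy the growth condition ‖D(x)‖_{V*} ≤ K(1 + ‖x‖_V^{p−1}) for all x ∈ V for some constant K > 0, and be coercive, i.e. there exist constants C₁ > 0 and C₂ ≥ 0 with ⟨D(x), x⟩ ≥ C₁‖x‖_V^p − C₂ for all x ∈ V. Then for every y ∈ V* there exists x ∈ V with D(x) = y, and moreover ‖x‖_V^p ≤ (C₁ + 2C₂)/C₁ + ‖y‖_{V*}²/C₁². -/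
open Filter Topology

/-- If every convex combination of finitely many affine constraints can be made ≤ 0 on a
compact convex set `K`, then some point of `K` satisfies all constraints simultaneously. -/
lemma exists_forall_le_of_forall_comb {V : Type*} [NormedAddCommGroup V] [NormedSpace ℝ V]
    (ι : Type*) [Fintype ι] [DecidableEq ι]
    (Kset : Set V) (hKc : Convex ℝ Kset) (hKcpt : IsCompact Kset) (hKne : Kset.Nonempty)
    (L : ι → V →L[ℝ] ℝ) (c : ι → ℝ)
    (hfeas : ∀ μ : ι → ℝ, (∀ i, 0 ≤ μ i) → ∑ i, μ i = 1 →
      ∃ x ∈ Kset, ∑ i, μ i * (L i x - c i) ≤ 0) :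
    ∃ x ∈ Kset, ∀ i, L i x - c i ≤ 0 := by
  cases isEmpty_or_nonempty ι with
  | inl h => exact ⟨hKne.choose, hKne.choose_spec, fun i => (IsEmpty.false i).elim⟩
  | inr hne =>
  by_contra hcon
  push_neg at hcon
  set E := EuclideanSpace ℝ ι
  set Φ : V → E := fun x => (WithLp.toLp 2 (fun i => L i x - c i) : EuclideanSpace ℝ ι) with hΦ
  have hΦcont : Continuous Φ :=
    ((PiLp.continuousLinearEquiv 2 ℝ (fun _ : ι => ℝ)).symm).continuous.comp
      (continuous_pi fun i => ((L i).continuous.sub continuous_const))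
  set A : Set E := Φ '' Kset with hA
  have hAconv : Convex ℝ A := by
    rintro _ ⟨x, hx, rfl⟩ _ ⟨x', hx', rfl⟩ a b ha hb hab
    refine ⟨a • x + b • x', hKc hx hx' ha hb hab, ?_⟩
    ext i
    show L i (a • x + b • x') - c i = a * (L i x - c i) + b * (L i x' - c i)
    rw [map_add, map_smul, map_smul]
    simp only [smul_eq_mul]
    linear_combination (c i) * hab
  have hAcpt : IsCompact A := hKcpt.image hΦcont
  set B : Set E := {v : E | ∀ i, v i ≤ 0} with hB
  have hBclosed : IsClosed B := by
    have : B = ⋂ i, {v : E | v i ≤ 0} := by ext v; simp [hB, Set.mem_iInter]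
    rw [this]
    exact isClosed_iInter fun i => isClosed_le
      ((continuous_apply i).comp (PiLp.continuousLinearEquiv 2 ℝ (fun _ : ι => ℝ)).continuous)
      continuous_const
  have hBconv : Convex ℝ B := by
    intro v hv w hw a b ha hb hab i
    have : (a • v + b • w) i = a * v i + b * w i := rfl
    rw [this]
    have h1 : a * v i ≤ 0 := mul_nonpos_of_nonneg_of_nonpos ha (hv i)
    have h2 : b * w i ≤ 0 := mul_nonpos_of_nonneg_of_nonpos hb (hw i)
    linarith
  have hdisj : Disjoint A B := by
    rw [Set.disjoint_left]
    rintro _ ⟨x, hx, rfl⟩ hmem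
    obtain ⟨i, hi⟩ := hcon x hx
    exact absurd (hmem i) (by simpa [hΦ] using hi.not_ge)
  obtain ⟨f, u, v, hfA, huv, hfB⟩ :=
    geometric_hahn_banach_compact_closed hAconv hAcpt hBconv hBclosed hdisj
  have hv0 : v < 0 := by
    have := hfB 0 (fun i => le_refl 0)
    simpa using this
  set μ : ι → ℝ := fun i => -f (EuclideanSpace.single i 1) with hμ
  have hμ0 : ∀ i, 0 ≤ μ i := by
    intro i
    by_contra hneg
    push_neg at hneg
    have hfi : 0 < f (EuclideanSpace.single i (1:ℝ)) := by simpa [hμ, neg_neg] using hneg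
    set s : ℝ := (v - 1) / f (EuclideanSpace.single i (1:ℝ)) with hs
    have hsneg : s ≤ 0 := div_nonpos_of_nonpos_of_nonneg (by linarith) hfi.le
    have hbmem : (s • EuclideanSpace.single i (1:ℝ)) ∈ B := by
      intro j
      show s * (EuclideanSpace.single i (1:ℝ)) j ≤ 0
      rw [EuclideanSpace.single_apply]
      rcases eq_or_ne j i with h | h
      · simpa [h] using hsneg
      · simp [h]
    have := hfB _ hbmem
    rw [map_smul] at this
    simp only [smul_eq_mul, hs] at this
    rw [div_mul_cancel₀ _ hfi.ne'] at this
    linarith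
  have hrepr : ∀ w : E, f w = ∑ i, w i * f (EuclideanSpace.single i 1) := by
    intro w
    have hw : w = ∑ i, w i • EuclideanSpace.single i (1:ℝ) := by
      ext j
      rw [WithLp.ofLp_sum, Finset.sum_apply]
      simp [EuclideanSpace.single_apply]
    conv_lhs => rw [hw]
    rw [map_sum]
    simp [mul_comm]
  have hpos : ∀ x ∈ Kset, 0 < ∑ i, μ i * (L i x - c i) := by
    intro x hx
    have h1 : f (Φ x) < u := hfA _ ⟨x, hx, rfl⟩
    have h2 : f (Φ x) = -∑ i, μ i * (L i x - c i) := by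
      rw [hrepr (Φ x)]
      rw [← Finset.sum_neg_distrib]
      refine Finset.sum_congr rfl fun i _ => ?_
      show (L i x - c i) * f (EuclideanSpace.single i 1) = -(μ i * (L i x - c i))
      simp [hμ]; ring
    rw [h2] at h1
    linarith
  set σ : ℝ := ∑ i, μ i with hσ
  have hσ0 : 0 ≤ σ := Finset.sum_nonneg fun i _ => hμ0 i
  rcases eq_or_lt_of_le hσ0 with heq | hlt
  · obtain ⟨x₀, hx₀⟩ := hKne
    have hall : ∀ i ∈ Finset.univ, μ i = 0 := by
      intro i _
      have := (Finset.sum_eq_zero_iff_of_nonneg (fun i _ => hμ0 i)).mp heq.symm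
      exact this i (Finset.mem_univ i)
    have : ∑ i, μ i * (L i x₀ - c i) = 0 :=
      Finset.sum_eq_zero fun i hi => by rw [hall i hi, zero_mul]
    linarith [hpos x₀ hx₀]
  · obtain ⟨x, hx, hle⟩ := hfeas (fun i => μ i / σ)
      (fun i => div_nonneg (hμ0 i) hσ0) (by rw [← Finset.sum_div]; exact div_self hlt.ne')
    have : ∑ i, μ i / σ * (L i x - c i) = (∑ i, μ i * (L i x - c i)) / σ := by
      rw [Finset.sum_div]
      exact Finset.sum_congr rfl fun i _ => by ring
    rw [this] at hle
    have := hpos x hx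
    have : (∑ i, μ i * (L i x - c i)) / σ > 0 := div_pos this hlt
    linarith


lemma finiteVI {V : Type*} [NormedAddCommGroup V] [NormedSpace ℝ V]
    (D : V → V →L[ℝ] ℝ)
    (hmono : ∀ x y : V, 0 ≤ (D x - D y) (x - y))
    (p : ℝ) (hp : 2 ≤ p)
    (C₁ C₂ : ℝ) (hC₁ : 0 < C₁) (hC₂ : 0 ≤ C₂)
    (hcoer : ∀ x : V, C₁ * ‖x‖ ^ p - C₂ ≤ D x x)
    (y : V →L[ℝ] ℝ) (R : ℝ) (hR0 : 0 ≤ R)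
    (hR : ∀ s : ℝ, R ≤ s → ‖y‖ * s + C₂ ≤ C₁ * s ^ p)
    (t : Finset V) :
    ∃ x : V, ‖x‖ ≤ R ∧ ∀ z ∈ t, (D z - y) (x - z) ≤ 0 := by
  classical
  set ι := {z // z ∈ t}
  set Kset : Set V := convexHull ℝ (insert 0 ↑t) ∩ Metric.closedBall 0 R with hKdef
  have hKconv : Convex ℝ Kset := (convex_convexHull ℝ _).inter (convex_closedBall _ _)
  have hKcpt : IsCompact Kset :=
    ((t.finite_toSet.insert 0).isCompact_convexHull ℝ).inter_right Metric.isClosed_closedBall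
  have h0K : (0 : V) ∈ Kset :=
    ⟨subset_convexHull ℝ _ (Set.mem_insert 0 _), Metric.mem_closedBall_self hR0⟩
  set L : ι → V →L[ℝ] ℝ := fun i => D i.1 - y with hL
  set c : ι → ℝ := fun i => (D i.1 - y) i.1 with hc
  have hfeas : ∀ μ : ι → ℝ, (∀ i, 0 ≤ μ i) → ∑ i, μ i = 1 →
      ∃ x ∈ Kset, ∑ i, μ i * (L i x - c i) ≤ 0 := by
    intro μ hμ0 hμ1
    set s₀ : ℝ := ∑ i : ι, μ i * ‖(i : V)‖ with hs₀
    rcases le_or_gt R s₀ with hcase | hcase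
    · -- use x = 0
      refine ⟨0, h0K, ?_⟩
      have hy : ∀ i : ι, C₁ * ‖(i : V)‖ ^ p - C₂ - ‖y‖ * ‖(i : V)‖ ≤ (D i.1 - y) i.1 := by
        intro i
        have h1 := hcoer (i : V)
        have h2 : y (i : V) ≤ ‖y‖ * ‖(i : V)‖ := le_trans (le_abs_self _)
          (by rw [← Real.norm_eq_abs]; exact y.le_opNorm _)
        have : (D i.1 - y) i.1 = D i.1 i.1 - y i.1 := by
          simp [ContinuousLinearMap.sub_apply]
        rw [this]; linarith
      have hjensen : s₀ ^ p ≤ ∑ i : ι, μ i * ‖(i : V)‖ ^ p := by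
        have := (convexOn_rpow (by linarith : (1:ℝ) ≤ p)).map_sum_le
          (t := Finset.univ) (w := μ) (p := fun i : ι => ‖(i : V)‖)
          (fun i _ => hμ0 i) hμ1 (fun i _ => Set.mem_Ici.2 (norm_nonneg _))
        simpa [smul_eq_mul, hs₀] using this
      have hRs := hR s₀ hcase
      set S : ℝ := ∑ i : ι, μ i * ‖(i : V)‖ ^ p with hS
      have hsum : 0 ≤ ∑ i : ι, μ i * (D i.1 - y) i.1 := by
        have step : ∑ i : ι, μ i * (C₁ * ‖(i : V)‖ ^ p - C₂ - ‖y‖ * ‖(i : V)‖)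
            ≤ ∑ i : ι, μ i * (D i.1 - y) i.1 :=
          Finset.sum_le_sum fun i _ => mul_le_mul_of_nonneg_left (hy i) (hμ0 i)
        have expand : ∑ i : ι, μ i * (C₁ * ‖(i : V)‖ ^ p - C₂ - ‖y‖ * ‖(i : V)‖)
            = C₁ * S - C₂ * (∑ i : ι, μ i) - ‖y‖ * s₀ := by
          rw [hS, hs₀, Finset.mul_sum, Finset.mul_sum, Finset.mul_sum,
            ← Finset.sum_sub_distrib, ← Finset.sum_sub_distrib]
          exact Finset.sum_congr rfl fun i _ => by ring
        have hCS : C₁ * s₀ ^ p ≤ C₁ * S := mul_le_mul_of_nonneg_left hjensen hC₁.le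
        rw [hμ1] at expand
        linarith
      refine le_trans (le_of_eq ?_) (neg_nonpos_of_nonneg hsum)
      rw [← Finset.sum_neg_distrib]
      refine Finset.sum_congr rfl fun i _ => ?_
      simp only [hL, hc, map_zero]
      ring
    · -- use x = weighted average
      set x : V := ∑ i : ι, μ i • (i : V) with hx
      have hxconv : x ∈ convexHull ℝ (insert 0 (↑t : Set V)) := by
        refine (convex_convexHull ℝ _).sum_mem (fun i _ => hμ0 i) hμ1 (fun i _ => ?_)
        exact subset_convexHull ℝ _ (Set.mem_insert_of_mem _ (Finset.mem_coe.2 i.2))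
      have hxnorm : ‖x‖ ≤ s₀ := by
        refine le_trans (norm_sum_le _ _) (le_of_eq ?_)
        refine Finset.sum_congr rfl fun i _ => ?_
        rw [norm_smul, Real.norm_eq_abs, abs_of_nonneg (hμ0 i)]
      refine ⟨x, ⟨hxconv, Metric.mem_closedBall.2 (by
        rw [dist_zero_right]; linarith)⟩, ?_⟩
      -- key monotonicity computation
      set A : ι → ι → ℝ := fun i j => μ i * μ j * ((D i.1 - y) j.1 - (D i.1 - y) i.1) with hA
      have hT : ∑ i : ι, μ i * (L i x - c i) = ∑ i : ι, ∑ j : ι, A i j := by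
        refine Finset.sum_congr rfl fun i _ => ?_
        have h1 : L i x = ∑ j : ι, μ j * (D i.1 - y) j.1 := by
          rw [hx, map_sum]
          exact Finset.sum_congr rfl fun j _ => by rw [map_smul, smul_eq_mul]
        have h2 : c i = ∑ j : ι, μ j * (D i.1 - y) i.1 := by
          rw [← Finset.sum_mul, hμ1, one_mul]
        rw [h1, h2, ← Finset.sum_sub_distrib, Finset.mul_sum]
        exact Finset.sum_congr rfl fun j _ => by rw [hA]; ring
      have hsym : ∀ i j : ι, A i j + A j i ≤ 0 := by
        intro i j
        have hm := hmono i.1 j.1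
        have hexp : (D i.1 - D j.1) (i.1 - j.1)
            = D i.1 i.1 - D i.1 j.1 - D j.1 i.1 + D j.1 j.1 := by
          simp [ContinuousLinearMap.sub_apply, map_sub]; ring
        rw [hexp] at hm
        have hμij : 0 ≤ μ i * μ j := mul_nonneg (hμ0 i) (hμ0 j)
        have hAe : A i j + A j i
            = -(μ i * μ j * (D i.1 i.1 - D i.1 j.1 - D j.1 i.1 + D j.1 j.1)) := by
          simp only [hA, ContinuousLinearMap.sub_apply]
          ring
        rw [hAe]
        exact neg_nonpos_of_nonneg (mul_nonneg hμij hm)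
      have h2T : (∑ i : ι, ∑ j : ι, A i j) + (∑ i : ι, ∑ j : ι, A i j) ≤ 0 := by
        nth_rewrite 2 [Finset.sum_comm]
        rw [← Finset.sum_add_distrib]
        refine Finset.sum_nonpos fun i _ => ?_
        rw [← Finset.sum_add_distrib]
        exact Finset.sum_nonpos fun j _ => hsym i j
      rw [hT]; linarith
  obtain ⟨x, hxK, hxall⟩ := exists_forall_le_of_forall_comb ι Kset hKconv hKcpt ⟨0, h0K⟩ L c hfeas
  refine ⟨x, ?_, fun z hz => ?_⟩
  · have := hxK.2; rwa [Metric.mem_closedBall, dist_zero_right] at this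
  · have := hxall ⟨z, hz⟩
    simp only [hL, hc] at this
    rwa [map_sub]

lemma normBound (C₁ C₂ p n N yn : ℝ) (hC₁ : 0 < C₁) (hC₂ : 0 ≤ C₂) (hp : 2 ≤ p)
    (hn0 : 0 ≤ n) (hN : N = n ^ p) (hy0 : 0 ≤ yn)
    (hxx : C₁ * N - C₂ ≤ yn * n) :
    N ≤ (C₁ + 2 * C₂) / C₁ + yn ^ 2 / C₁ ^ 2 := by
  have hN0 : 0 ≤ N := hN ▸ Real.rpow_nonneg hn0 p
  have hsq : n ^ 2 ≤ 1 + N := by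
    rcases le_or_gt n 1 with h | h
    · nlinarith
    · have h1 : n ^ (2:ℝ) ≤ n ^ p := Real.rpow_le_rpow_of_exponent_le h.le hp
      have h2 : n ^ (2:ℝ) = n ^ (2:ℕ) := by
        rw [show (2:ℝ) = ((2:ℕ):ℝ) by norm_num, Real.rpow_natCast]
      rw [h2, ← hN] at h1
      nlinarith
  have hyoung : 2 * C₁ * (yn * n) ≤ yn ^ 2 + C₁ ^ 2 * n ^ 2 := by
    nlinarith [sq_nonneg (yn - C₁ * n)]
  have h1 : C₁ ^ 2 * N ≤ yn ^ 2 + C₁ ^ 2 + 2 * C₁ * C₂ := by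
    nlinarith [mul_le_mul_of_nonneg_left hxx (by positivity : (0:ℝ) ≤ 2 * C₁),
      mul_le_mul_of_nonneg_left hsq (sq_nonneg C₁)]
  rw [div_add_div _ _ (ne_of_gt hC₁) (ne_of_gt (pow_pos hC₁ 2)), le_div_iff₀ (by positivity)]
  nlinarith [mul_le_mul_of_nonneg_left h1 hC₁.le]


/-- Proposition 4.2 (existence part): a monotone, hemicontinuous, coercive operator
`D : V → V*` with polynomial growth on a separable reflexive Banach space is surjective,
with a quantitative norm bound on the solution. -/
theorem stmt_0
    {V : Type*} [NormedAddCommGroup V] [NormedSpace ℝ V] [CompleteSpace V]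
    [TopologicalSpace.SeparableSpace V]
    (hrefl : Function.Surjective (NormedSpace.inclusionInDoubleDual ℝ V))
    (p : ℝ) (hp : 2 ≤ p)
    (D : V → V →L[ℝ] ℝ)
    (hmono : ∀ x y : V, 0 ≤ (D x - D y) (x - y))
    (hhemi : ∀ x y z : V,
      Tendsto (fun ε : ℝ => D (x + ε • y) z) (𝓝 0) (𝓝 (D x z)))
    (K : ℝ) (hK : 0 < K)
    (hgrowth : ∀ x : V, ‖D x‖ ≤ K * (1 + ‖x‖ ^ (p - 1)))
    (C₁ C₂ : ℝ) (hC₁ : 0 < C₁) (hC₂ : 0 ≤ C₂)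
    (hcoer : ∀ x : V, C₁ * ‖x‖ ^ p - C₂ ≤ D x x) :
    ∀ y : V →L[ℝ] ℝ, ∃ x : V, D x = y ∧
      ‖x‖ ^ p ≤ (C₁ + 2 * C₂) / C₁ + ‖y‖ ^ 2 / C₁ ^ 2 := by
  have hfvi : ∀ (y : V →L[ℝ] ℝ) (R : ℝ), 0 ≤ R →
      (∀ s : ℝ, R ≤ s → ‖y‖ * s + C₂ ≤ C₁ * s ^ p) →
      ∀ t : Finset V, ∃ x : V, ‖x‖ ≤ R ∧ ∀ z ∈ t, (D z - y) (x - z) ≤ 0 :=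
    fun y R hR0 hR t => finiteVI D hmono p hp C₁ C₂ hC₁ hC₂ hcoer y R hR0 hR t
  intro y
  -- choice of radius
  set R : ℝ := 1 + (‖y‖ + C₂) / C₁ with hRdef
  have hR0 : 0 ≤ R := by positivity
  have hR1 : 1 ≤ R := by
    have h : 0 ≤ (‖y‖ + C₂) / C₁ := by positivity
    rw [hRdef]
    exact le_add_of_nonneg_right h
  have hR : ∀ s : ℝ, R ≤ s → ‖y‖ * s + C₂ ≤ C₁ * s ^ p := by
    intro s hs
    have hs1 : 1 ≤ s := le_trans hR1 hs
    have hs0 : 0 ≤ s := by linarith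
    have h2p : s ^ (2:ℝ) ≤ s ^ p := Real.rpow_le_rpow_of_exponent_le hs1 hp
    have h2 : s ^ (2:ℝ) = s * s := by
      rw [show (2:ℝ) = ((2:ℕ):ℝ) by norm_num, Real.rpow_natCast]; ring
    rw [h2] at h2p
    have hC1R : C₁ * R = C₁ + (‖y‖ + C₂) := by
      rw [hRdef, mul_add, mul_one, mul_div_assoc', mul_comm C₁, mul_div_assoc, div_self hC₁.ne', mul_one]
    nlinarith [mul_le_mul_of_nonneg_left h2p hC₁.le,
      mul_le_mul_of_nonneg_right (mul_le_mul_of_nonneg_left hs hC₁.le) hs0]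
  -- Banach-Alaoglu + finite intersection property
  set X := WeakDual ℝ (V →L[ℝ] ℝ)
  set SB : Set X := WeakDual.toStrongDual ⁻¹' Metric.closedBall 0 R with hSB
  have hScpt : IsCompact SB := WeakDual.isCompact_closedBall (𝕜 := ℝ) 0 R
  set Z : V → Set X := fun z => {Φ : X | Φ (D z - y) ≤ (D z - y) z} with hZ
  have hZclosed : ∀ z, IsClosed (Z z) := fun z =>
    isClosed_le (WeakDual.eval_continuous (D z - y)) continuous_const
  have hne : (SB ∩ ⋂ z, Z z).Nonempty := by
    by_contra hempty
    rw [Set.not_nonempty_iff_eq_empty] at hempty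
    obtain ⟨t, ht⟩ := hScpt.elim_finite_subfamily_closed Z hZclosed hempty
    obtain ⟨x, hxR, hxt⟩ := hfvi y R hR0 hR t
    have hmem : (WeakDual.toStrongDual.symm (NormedSpace.inclusionInDoubleDual ℝ V x) : X)
        ∈ SB ∩ ⋂ z ∈ t, Z z := by
      constructor
      · have e : WeakDual.toStrongDual (WeakDual.toStrongDual.symm
            (NormedSpace.inclusionInDoubleDual ℝ V x)) = NormedSpace.inclusionInDoubleDual ℝ V x :=
          LinearEquiv.apply_symm_apply _ _
        rw [hSB, Set.mem_preimage, e, Metric.mem_closedBall]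
        have hb := le_trans (NormedSpace.double_dual_bound ℝ V x) hxR
        exact (dist_zero_right (NormedSpace.inclusionInDoubleDual ℝ V x)).trans_le hb
      · rw [Set.mem_iInter₂]
        intro z hz
        show (WeakDual.toStrongDual.symm (NormedSpace.inclusionInDoubleDual ℝ V x) : X)
            (D z - y) ≤ (D z - y) z
        have h1 : (WeakDual.toStrongDual.symm (NormedSpace.inclusionInDoubleDual ℝ V x) : X)
            (D z - y) = (D z - y) x := rfl
        have h2 := hxt z hz
        rw [map_sub] at h2
        rw [h1]; linarith
    rw [ht] at hmem
    exact hmem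
  obtain ⟨Φ, hΦS, hΦZ⟩ := hne
  obtain ⟨x, hx⟩ := hrefl (WeakDual.toStrongDual Φ)
  have hkey : ∀ z : V, (D z - y) x ≤ (D z - y) z := by
    intro z
    have h1 : Φ (D z - y) ≤ (D z - y) z := by
      have := Set.mem_iInter.1 hΦZ z
      exact this
    have h2 : Φ (D z - y) = (D z - y) x := by
      have : NormedSpace.inclusionInDoubleDual ℝ V x (D z - y) = (D z - y) x :=
        NormedSpace.dual_def ℝ V x (D z - y)
      rw [← this, hx]
      rfl
    rwa [h2] at h1
  -- Minty's trick
  have hDx : D x = y := by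
    have hside : ∀ w : V, y w ≤ D x w := by
      intro w
      have hev : ∀ᶠ ε in 𝓝[>] (0:ℝ), y w ≤ D (x + ε • w) w := by
        filter_upwards [self_mem_nhdsWithin] with ε (hε : ε ∈ Set.Ioi (0:ℝ))
        have hεpos : 0 < ε := hε
        have := hkey (x + ε • w)
        simp only [ContinuousLinearMap.sub_apply] at this
        -- (D z) x - y x ≤ (D z)(x + ε w) - y (x + ε w)
        have h3 : 0 ≤ D (x + ε • w) (ε • w) - y (ε • w) := by
          have hxadd : D (x + ε • w) (x + ε • w) = D (x + ε • w) x + D (x + ε • w) (ε • w) :=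
            map_add _ _ _
          have hyadd : y (x + ε • w) = y x + y (ε • w) := map_add _ _ _
          rw [hxadd, hyadd] at this
          linarith
        rw [map_smul, map_smul, smul_eq_mul, smul_eq_mul] at h3
        nlinarith
      have hlim : Tendsto (fun ε : ℝ => D (x + ε • w) w) (𝓝[>] 0) (𝓝 (D x w)) :=
        (hhemi x w w).mono_left nhdsWithin_le_nhds
      exact ge_of_tendsto hlim hev
    refine ContinuousLinearMap.ext fun w => le_antisymm ?_ (hside w)
    have := hside (-w)
    rw [map_neg, map_neg] at this
    linarith
  -- the norm bound
  refine ⟨x, hDx, ?_⟩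
  have hxx := hcoer x
  rw [hDx] at hxx
  have hyx : y x ≤ ‖y‖ * ‖x‖ := le_trans (le_abs_self _)
    (by rw [← Real.norm_eq_abs]; exact y.le_opNorm _)
  exact normBound C₁ C₂ p ‖x‖ (‖x‖ ^ p) ‖y‖ hC₁ hC₂ hp (norm_nonneg _) rfl (norm_nonneg _)
    (by linarith)
end

section
/- Let V be a finite-dimensional real normed vector space, p ∈ (1, ∞), and let D : V → V* be monotone, hemicontinuous, and satisfy ‖D(x)‖_{V*} ≤ K(1 + ‖x‖_V^{p−1}) for all x ∈ V for some constant K > 0. Then D is continuous from V to V* (both with their norm topologies). -/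
/-!
By finite dimensionality and the growth bound, `D` maps a neighbourhood of `x` into a compact
ball of `V*`, so it suffices to show that every cluster point `f` of `D` at `x` equals `D x`.
Passing to the limit in the monotonicity inequality gives `0 ≤ ⟨f - D z, x - z⟩` for all `z`,
and Minty's trick (take `z = x - t w`, divide by `t > 0` and let `t → 0⁺` using hemicontinuity)
turns this into `f = D x`.
-/

open Filter Topology Metric

theorem norm_le_of_mem_ball_of_norm_le_rpow {E F : Type*} [SeminormedAddCommGroup E]
    [SeminormedAddCommGroup F] {f : E → F} {K p : ℝ} (hK : 0 ≤ K) (hp : 0 ≤ p)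
    (hf : ∀ x, ‖f x‖ ≤ K * (1 + ‖x‖ ^ p)) {x y : E} (hy : y ∈ ball x 1) :
    ‖f y‖ ≤ K * (1 + (‖x‖ + 1) ^ p) := by
  have hy' : ‖y‖ ≤ ‖x‖ + 1 := by
    have := norm_le_norm_add_norm_sub' y x
    rw [mem_ball, dist_eq_norm] at hy
    linarith
  calc ‖f y‖ ≤ K * (1 + ‖y‖ ^ p) := hf y
    _ ≤ K * (1 + (‖x‖ + 1) ^ p) := by gcongr

theorem ContinuousLinearMap.eq_zero_of_forall_nonneg {V : Type*} [AddCommGroup V] [Module ℝ V]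
    [TopologicalSpace V] {g : V →L[ℝ] ℝ} (hg : ∀ w, 0 ≤ g w) : g = 0 := by
  ext w
  have := hg (-w)
  rw [map_neg] at this
  exact le_antisymm (neg_nonneg.1 this) (hg w)

theorem eq_of_forall_nonneg_sub_apply_sub {V : Type*} [AddCommGroup V] [Module ℝ V]
    [TopologicalSpace V] {D : V → V →L[ℝ] ℝ}
    (hhemi : ∀ x y z : V, Tendsto (fun ε : ℝ => D (x + ε • y) z) (𝓝 0) (𝓝 (D x z)))
    {f : V →L[ℝ] ℝ} {x : V} (hf : ∀ z, 0 ≤ (f - D z) (x - z)) : f = D x := by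
  refine sub_eq_zero.1 (ContinuousLinearMap.eq_zero_of_forall_nonneg fun w => ?_)
  have hpos : ∀ t : ℝ, 0 < t → 0 ≤ (f - D (x + t • -w)) w := by
    intro t ht
    have h := hf (x + t • -w)
    rw [show x - (x + t • -w) = t • w by rw [sub_add_cancel_left, smul_neg, neg_neg],
      map_smul, smul_eq_mul] at h
    exact nonneg_of_mul_nonneg_right h ht
  have hlim : Tendsto (fun t : ℝ => (f - D (x + t • -w)) w) (𝓝[>] 0) (𝓝 ((f - D x) w)) :=
    (tendsto_const_nhds.sub (hhemi x (-w) w)).mono_left nhdsWithin_le_nhds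
  exact ge_of_tendsto hlim (eventually_nhdsWithin_of_forall hpos)

theorem nonneg_sub_apply_sub_of_mapClusterPt {V : Type*} [NormedAddCommGroup V]
    [NormedSpace ℝ V] {D : V → V →L[ℝ] ℝ} (hmono : ∀ x y : V, 0 ≤ (D x - D y) (x - y))
    {f : V →L[ℝ] ℝ} {x : V} (hf : MapClusterPt f (𝓝 x) D) (z : V) :
    0 ≤ (f - D z) (x - z) := by
  obtain ⟨U, hUx, hUf⟩ := mapClusterPt_iff_ultrafilter.1 hf
  have hlim : Tendsto (fun y => (D y - D z) (y - z)) U (𝓝 ((f - D z) (x - z))) :=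
    (isBoundedBilinearMap_apply.continuous.tendsto _).comp
      ((hUf.sub tendsto_const_nhds).prodMk_nhds (tendsto_id.mono_left hUx |>.sub_const z))
  exact ge_of_tendsto hlim (Eventually.of_forall fun y => hmono y z)

/-- Lemma 4.1, finite-dimensional case: a monotone, hemicontinuous operator with
polynomial growth on a finite-dimensional normed space is (norm-to-norm) continuous. -/
theorem stmt_4
    {V : Type*} [NormedAddCommGroup V] [NormedSpace ℝ V] [FiniteDimensional ℝ V]
    (p : ℝ) (hp : 1 < p)
    (D : V → V →L[ℝ] ℝ)
    (hmono : ∀ x y : V, 0 ≤ (D x - D y) (x - y))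
    (hhemi : ∀ x y z : V,
      Tendsto (fun ε : ℝ => D (x + ε • y) z) (𝓝 0) (𝓝 (D x z)))
    (K : ℝ) (hK : 0 < K)
    (hgrowth : ∀ x : V, ‖D x‖ ≤ K * (1 + ‖x‖ ^ (p - 1))) :
    Continuous D := by
  refine continuous_iff_continuousAt.2 fun x => ?_
  have hbdd : ∀ᶠ y in 𝓝 x, D y ∈ closedBall 0 (K * (1 + (‖x‖ + 1) ^ (p - 1))) :=
    eventually_of_mem (ball_mem_nhds x one_pos) fun y hy => mem_closedBall_zero_iff.2 <|
      norm_le_of_mem_ball_of_norm_le_rpow hK.le (sub_nonneg.2 hp.le) hgrowth hy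
  exact (isCompact_closedBall _ _).tendsto_nhds_of_unique_mapClusterPt hbdd fun f _ hf =>
    eq_of_forall_nonneg_sub_apply_sub hhemi (nonneg_sub_apply_sub_of_mapClusterPt hmono hf)
end

section
/- Let V be a real Banach space, H a real Hilbert space, e : V → H a continuous linear map, and define j : V → V* by j(x)(v) := (e v, e x)_H. Let r ∈ ℕ, let A : V → V* and B¹, …, Bʳ : V → H, let K ≥ 0 and γ > 0, and suppose that for all x, y ∈ V: 2⟨x − y, A(x) − A(y)⟩ + Σ_{j=1}^r ‖Bʲ(x) − Bʲ(y)‖_H² ≤ K‖e(x − y)‖_H². Define Ā(x) := γ^{−1} A(γ x) − (K/2) j(x) and B̄ʲ(x) := γ^{−1} Bʲ(γ x). Then for all x, y ∈ V: 2⟨x − y, Ā(x) − Ā(y)⟩ + Σ_{j=1}^r ‖B̄ʲ(x) − B̄ʲ(y)‖_H² ≤ 0. -/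
/-!
Substituting `γ • x, γ • y` into (C1bis) and dividing by `γ²` turns the right-hand side into
`K ‖e (x - y)‖²`, since all terms are quadratic in the increment. The shift `-(K/2) j` removes
exactly this amount, because `⟨x - y, j x - j y⟩ = ‖e (x - y)‖²`.
-/

open Finset

theorem norm_smul_sub_smul_sq {E : Type*} [SeminormedAddCommGroup E] [NormedSpace ℝ E]
    (c : ℝ) (u v : E) : ‖c • u - c • v‖ ^ 2 = c ^ 2 * ‖u - v‖ ^ 2 := by
  rw [← smul_sub, norm_smul, mul_pow, Real.norm_eq_abs, sq_abs]

section Duality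

variable {V H : Type*} [NormedAddCommGroup V] [NormedSpace ℝ V]
  [NormedAddCommGroup H] [InnerProductSpace ℝ H]
  {e : V →L[ℝ] H} {j : V → V →L[ℝ] ℝ}

theorem duality_sub_apply_sub (hj : ∀ x v : V, j x v = (inner ℝ (e v) (e x) : ℝ)) (x y : V) :
    (j x - j y) (x - y) = ‖e (x - y)‖ ^ 2 := by
  rw [sub_apply, hj, hj, ← inner_sub_right, ← map_sub,
    real_inner_self_eq_norm_sq]

theorem rescaled_sub_apply_sub (hj : ∀ x v : V, j x v = (inner ℝ (e v) (e x) : ℝ))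
    {γ : ℝ} (hγ : γ ≠ 0) (c : ℝ) (a b : V →L[ℝ] ℝ) (x y : V) :
    ((γ⁻¹ • a - c • j x) - (γ⁻¹ • b - c • j y)) (x - y) =
      γ⁻¹ ^ 2 * (a - b) (γ • x - γ • y) - c * ‖e (x - y)‖ ^ 2 := by
  have hjxy := duality_sub_apply_sub hj x y
  simp only [sub_apply, smul_apply, smul_eq_mul,
    ← smul_sub, map_smul] at hjxy ⊢
  rw [← hjxy]
  field_simp
  ring

end Duality

theorem stmt_6_general
    {V H : Type*} [NormedAddCommGroup V] [NormedSpace ℝ V]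
    [NormedAddCommGroup H] [InnerProductSpace ℝ H]
    (e : V →L[ℝ] H)
    (j : V → V →L[ℝ] ℝ) (hj : ∀ x v : V, j x v = (inner ℝ (e v) (e x) : ℝ))
    (r : ℕ) (A : V → V →L[ℝ] ℝ) (B : Fin r → V → H)
    (K γ : ℝ) (hγ : 0 < γ)
    (hmono : ∀ x y : V,
      2 * (A x - A y) (x - y) + ∑ i, ‖B i x - B i y‖ ^ 2 ≤ K * ‖e (x - y)‖ ^ 2) :
    ∀ x y : V,
      2 * (((γ⁻¹ • A (γ • x) - (K / 2) • j x) -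
            (γ⁻¹ • A (γ • y) - (K / 2) • j y)) (x - y)) +
        ∑ i, ‖γ⁻¹ • B i (γ • x) - γ⁻¹ • B i (γ • y)‖ ^ 2 ≤ 0 := by
  intro x y
  have hγ0 : γ ≠ 0 := hγ.ne'
  calc _ = γ⁻¹ ^ 2 * (2 * (A (γ • x) - A (γ • y)) (γ • x - γ • y) +
          ∑ i, ‖B i (γ • x) - B i (γ • y)‖ ^ 2) - K * ‖e (x - y)‖ ^ 2 := by
        simp only [rescaled_sub_apply_sub hj hγ0, norm_smul_sub_smul_sq, mul_add, mul_sum]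
        ring
    _ ≤ γ⁻¹ ^ 2 * (K * ‖e (γ • x - γ • y)‖ ^ 2) - K * ‖e (x - y)‖ ^ 2 := by
        gcongr
        exact hmono _ _
    _ = 0 := by
        rw [map_sub, map_smul, map_smul, norm_smul_sub_smul_sq, ← map_sub]
        field_simp
        ring

/-- Rescaling reduces the weakened monotonicity condition (C1bis) to the monotonicity
condition (C1): if `(A, B)` satisfies (C1bis) with constant `K`, then
`Ā(x) := γ⁻¹ A(γx) − (K/2) j(x)`, `B̄ʲ(x) := γ⁻¹ Bʲ(γx)` satisfies (C1). -/
theorem stmt_6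
    {V H : Type*} [NormedAddCommGroup V] [NormedSpace ℝ V]
    [NormedAddCommGroup H] [InnerProductSpace ℝ H]
    (e : V →L[ℝ] H)
    (j : V → V →L[ℝ] ℝ) (hj : ∀ x v : V, j x v = (inner ℝ (e v) (e x) : ℝ))
    (r : ℕ) (A : V → V →L[ℝ] ℝ) (B : Fin r → V → H)
    (K γ : ℝ) (hK : 0 ≤ K) (hγ : 0 < γ)
    (hmono : ∀ x y : V,
      2 * (A x - A y) (x - y) + ∑ i, ‖B i x - B i y‖ ^ 2 ≤ K * ‖e (x - y)‖ ^ 2) :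
    ∀ x y : V,
      2 * (((γ⁻¹ • A (γ • x) - (K / 2) • j x) -
            (γ⁻¹ • A (γ • y) - (K / 2) • j y)) (x - y)) +
        ∑ i, ‖γ⁻¹ • B i (γ • x) - γ⁻¹ • B i (γ • y)‖ ^ 2 ≤ 0 :=
  stmt_6_general e j hj r A B K γ hγ hmono
end

section
/- Let V be a real Banach space, H a real Hilbert space, e : V → H a continuous linear map, and j : V → V* defined by j(x)(v) := (e v, e x)_H. Let a < b be reals, p ∈ [2, ∞), and let A : [a, b] × V → V* be such that for each x ∈ V the map s ↦ A(s, x) is Bochner integrable on [a, b]. Let λ, K₁, K̄₁ : [a, b] → [0, ∞) be Lebesgue integrable and suppose that for almost every s ∈ [a, b] and all x ∈ V: 2⟨x, A(s, x)⟩ + λ(s)‖x‖_V^p ≤ K₁(s)‖e x‖_H² + K̄₁(s). Define D(x) := j(x) − ∫_a^b A(s, x) ds. Then for all x ∈ V: ⟨D(x), x⟩ ≥ (1/2)(∫_a^b λ(s) ds) ‖x‖_V^p − (1/2)∫_a^b K̄₁(s) ds + (1 − (1/2)∫_a^b K₁(s) ds) ‖e x‖_H². -/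
open MeasureTheory

section IntegratedCoercivity

variable {α V : Type*} [MeasurableSpace α] {μ : Measure α}
  [NormedAddCommGroup V] [NormedSpace ℝ V]

theorem two_mul_integral_apply_add_le {A : α → V →L[ℝ] ℝ} {x : V} {lam K K' : α → ℝ}
    {c d : ℝ} (hA : Integrable A μ) (hlam : Integrable lam μ) (hK : Integrable K μ)
    (hK' : Integrable K' μ) (hbound : ∀ᵐ s ∂μ, 2 * A s x + lam s * c ≤ K s * d + K' s) :
    2 * (∫ s, A s ∂μ) x + (∫ s, lam s ∂μ) * c ≤ (∫ s, K s ∂μ) * d + ∫ s, K' s ∂μ := by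
  have hAx : Integrable (fun s => A s x) μ := hA.apply_continuousLinearMap x
  have hmono : ∫ s, (2 * A s x + lam s * c) ∂μ ≤ ∫ s, (K s * d + K' s) ∂μ :=
    integral_mono_ae ((hAx.const_mul 2).add (hlam.mul_const c)) ((hK.mul_const d).add hK') hbound
  rwa [integral_add (hAx.const_mul 2) (hlam.mul_const c), integral_add (hK.mul_const d) hK',
    integral_const_mul, integral_mul_const, integral_mul_const,
    ← ContinuousLinearMap.integral_apply hA] at hmono

end IntegratedCoercivity

theorem stmt_10_general
    {V H : Type*} [NormedAddCommGroup V] [NormedSpace ℝ V]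
    [NormedAddCommGroup H] [InnerProductSpace ℝ H]
    (e : V →L[ℝ] H)
    (j : V → V →L[ℝ] ℝ) (hj : ∀ x v : V, j x v = (inner ℝ (e v) (e x) : ℝ))
    (a b : ℝ) (p : ℝ)
    (A : ℝ → V → V →L[ℝ] ℝ)
    (hint : ∀ x : V, IntegrableOn (fun s => A s x) (Set.Icc a b))
    (lam K₁ K₁' : ℝ → ℝ)
    (hlam_int : IntegrableOn lam (Set.Icc a b))
    (hK₁_int : IntegrableOn K₁ (Set.Icc a b))
    (hK₁'_int : IntegrableOn K₁' (Set.Icc a b))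
    (hcoer : ∀ᵐ s ∂(volume.restrict (Set.Icc a b)), ∀ x : V,
      2 * A s x x + lam s * ‖x‖ ^ p ≤ K₁ s * ‖e x‖ ^ 2 + K₁' s) :
    ∀ x : V,
      (1 / 2) * (∫ s in Set.Icc a b, lam s) * ‖x‖ ^ p
          - (1 / 2) * (∫ s in Set.Icc a b, K₁' s)
          + (1 - (1 / 2) * ∫ s in Set.Icc a b, K₁ s) * ‖e x‖ ^ 2 ≤
        (j x - ∫ s in Set.Icc a b, A s x) x := by
  intro x
  have hjx : j x x = ‖e x‖ ^ 2 := by rw [hj, real_inner_self_eq_norm_sq]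
  have hbound := two_mul_integral_apply_add_le (hint x) hlam_int hK₁_int hK₁'_int
    (hcoer.mono fun s hs => hs x)
  rw [sub_apply, hjx]
  linarith

/-- Coercivity of the operator `D(x) = j(x) − ∫_a^b A(s,x) ds` arising in the implicit
time-discretization scheme (proof of Theorem 2.7). -/
theorem stmt_10
    {V H : Type*} [NormedAddCommGroup V] [NormedSpace ℝ V]
    [NormedAddCommGroup H] [InnerProductSpace ℝ H]
    (e : V →L[ℝ] H)
    (j : V → V →L[ℝ] ℝ) (hj : ∀ x v : V, j x v = (inner ℝ (e v) (e x) : ℝ))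
    (a b : ℝ) (hab : a < b) (p : ℝ) (hp : 2 ≤ p)
    (A : ℝ → V → V →L[ℝ] ℝ)
    (hint : ∀ x : V, IntegrableOn (fun s => A s x) (Set.Icc a b))
    (lam K₁ K₁' : ℝ → ℝ)
    (hlam_nonneg : ∀ s, 0 ≤ lam s) (hK₁_nonneg : ∀ s, 0 ≤ K₁ s)
    (hK₁'_nonneg : ∀ s, 0 ≤ K₁' s)
    (hlam_int : IntegrableOn lam (Set.Icc a b))
    (hK₁_int : IntegrableOn K₁ (Set.Icc a b))
    (hK₁'_int : IntegrableOn K₁' (Set.Icc a b))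
    (hcoer : ∀ᵐ s ∂(volume.restrict (Set.Icc a b)), ∀ x : V,
      2 * A s x x + lam s * ‖x‖ ^ p ≤ K₁ s * ‖e x‖ ^ 2 + K₁' s) :
    ∀ x : V,
      (1 / 2) * (∫ s in Set.Icc a b, lam s) * ‖x‖ ^ p
          - (1 / 2) * (∫ s in Set.Icc a b, K₁' s)
          + (1 - (1 / 2) * ∫ s in Set.Icc a b, K₁ s) * ‖e x‖ ^ 2 ≤
        (j x - ∫ s in Set.Icc a b, A s x) x :=
  stmt_10_general e j hj a b p A hint lam K₁ K₁' hlam_int hK₁_int hK₁'_int hcoer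
end

section
/- Let V be a real Banach space, H a real Hilbert space, e : V → H a continuous linear map, and j : V → V* defined by j(x)(v) := (e v, e x)_H. Let a < b be reals, p ∈ [2, ∞), q = p/(p−1), α ≥ 1, and let A : [a, b] × V → V* be such that for each x ∈ V the map s ↦ A(s, x) is Bochner integrable on [a, b]. Let λ, K₂ : [a, b] → [0, ∞) be Lebesgue integrable and suppose that for almost every s ∈ [a, b] and all x ∈ V: ‖A(s, x)‖_{V*}^q ≤ α λ(s)^q ‖x‖_V^p + λ(s)^{q−1} K₂(s). Define D(x) := j(x) − ∫_a^b A(s, x) ds. Then there exists a constant C > 0 such that ‖D(x)‖_{V*} ≤ C(1 + ‖x‖_V^{p−1}) for all x ∈ V. -/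
/-!
Raising the growth bound to the power `1/q` and using subadditivity of `t ↦ t ^ (1/q)` gives
`‖A(s, x)‖ ≤ α^{1/q} λ(s) ‖x‖^{p-1} + λ(s)^{1/p} K₂(s)^{1/q}`, and the last term is at most
`λ(s) + K₂(s)` by the weighted AM-GM inequality. Integrating over `[a, b]` bounds the integral
term by `α^{1/q} ‖λ‖₁ ‖x‖^{p-1} + ‖λ‖₁ + ‖K₂‖₁`, while `‖j x‖ ≤ ‖e‖² ‖x‖` and, since `p ≥ 2`,
`‖x‖ ≤ 1 + ‖x‖^{p-1}`.
-/

open MeasureTheory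

namespace Real.HolderConjugate

variable {p q : ℝ}

lemma rpow_inv_mul_rpow_inv_le_add (hpq : p.HolderConjugate q) {l k : ℝ} (hl : 0 ≤ l)
    (hk : 0 ≤ k) : l ^ p⁻¹ * k ^ q⁻¹ ≤ l + k := by
  have hmean := Real.geom_mean_le_arith_mean2_weighted hpq.inv_nonneg hpq.symm.inv_nonneg hl hk
    hpq.inv_add_inv_eq_one
  have hl' : p⁻¹ * l ≤ l := mul_le_of_le_one_left hl (inv_le_one_of_one_le₀ hpq.lt.le)
  have hk' : q⁻¹ * k ≤ k := mul_le_of_le_one_left hk (inv_le_one_of_one_le₀ hpq.symm.lt.le)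
  linarith

lemma le_of_rpow_le_growth (hpq : p.HolderConjugate q) {α l k t u : ℝ} (hα : 0 ≤ α)
    (hl : 0 ≤ l) (hk : 0 ≤ k) (ht : 0 ≤ t) (hu : 0 ≤ u)
    (h : u ^ q ≤ α * l ^ q * t ^ p + l ^ (q - 1) * k) :
    u ≤ α ^ q⁻¹ * t ^ (p - 1) * l + (l + k) := by
  have hq := hpq.symm
  have hmain : (α * l ^ q * t ^ p) ^ q⁻¹ = α ^ q⁻¹ * t ^ (p - 1) * l := by
    rw [Real.mul_rpow (by positivity) (by positivity), Real.mul_rpow hα (by positivity),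
      Real.rpow_rpow_inv hl hq.ne_zero, ← Real.rpow_mul ht, ← div_eq_mul_inv,
      hpq.div_conj_eq_sub_one]
    ring
  have hrest : (l ^ (q - 1) * k) ^ q⁻¹ = l ^ p⁻¹ * k ^ q⁻¹ := by
    rw [Real.mul_rpow (by positivity) hk, ← Real.rpow_mul hl, sub_mul, one_mul,
      mul_inv_cancel₀ hq.ne_zero, ← hq.one_sub_inv]
  calc u = (u ^ q) ^ q⁻¹ := (Real.rpow_rpow_inv hu hq.ne_zero).symm
    _ ≤ (α * l ^ q * t ^ p + l ^ (q - 1) * k) ^ q⁻¹ :=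
      Real.rpow_le_rpow (by positivity) h hq.inv_nonneg
    _ ≤ (α * l ^ q * t ^ p) ^ q⁻¹ + (l ^ (q - 1) * k) ^ q⁻¹ :=
      Real.rpow_add_le_add_rpow (by positivity) (by positivity) hq.inv_nonneg
        (inv_le_one_of_one_le₀ hq.lt.le)
    _ ≤ α ^ q⁻¹ * t ^ (p - 1) * l + (l + k) := by
      rw [hmain, hrest]
      gcongr
      exact hpq.rpow_inv_mul_rpow_inv_le_add hl hk

end Real.HolderConjugate

lemma norm_integral_le_of_norm_le_mul_add {X E : Type*} [MeasurableSpace X] {μ : Measure X}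
    [NormedAddCommGroup E] [NormedSpace ℝ E] {f : X → E} {g h : X → ℝ} (c : ℝ)
    (hg : Integrable g μ) (hh : Integrable h μ) (hf : ∀ᵐ s ∂μ, ‖f s‖ ≤ c * g s + h s) :
    ‖∫ s, f s ∂μ‖ ≤ c * ∫ s, g s ∂μ + ∫ s, h s ∂μ := by
  rw [← integral_const_mul, ← integral_add (hg.const_mul c) hh]
  exact norm_integral_le_of_norm_le ((hg.const_mul c).add hh) hf

lemma ContinuousLinearMap.norm_le_sq_opNorm_mul_of_apply_eq_inner {V H : Type*}
    [NormedAddCommGroup V] [NormedSpace ℝ V] [NormedAddCommGroup H] [InnerProductSpace ℝ H]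
    (e : V →L[ℝ] H) (φ : V →L[ℝ] ℝ) (x : V) (hφ : ∀ v, φ v = inner ℝ (e v) (e x)) :
    ‖φ‖ ≤ ‖e‖ ^ 2 * ‖x‖ := by
  refine φ.opNorm_le_bound (by positivity) fun v => ?_
  calc ‖φ v‖ = |inner ℝ (e v) (e x)| := by rw [hφ, Real.norm_eq_abs]
    _ ≤ ‖e v‖ * ‖e x‖ := abs_real_inner_le_norm _ _
    _ ≤ (‖e‖ * ‖v‖) * (‖e‖ * ‖x‖) := by gcongr <;> exact e.le_opNorm _
    _ = ‖e‖ ^ 2 * ‖x‖ * ‖v‖ := by ring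

lemma Real.le_one_add_rpow {t r : ℝ} (ht : 0 ≤ t) (hr : 1 ≤ r) : t ≤ 1 + t ^ r := by
  rcases le_total t 1 with h | h
  · linarith [Real.rpow_nonneg ht r]
  · linarith [Real.self_le_rpow_of_one_le h hr]

theorem stmt_11_general
    {V H : Type*} [NormedAddCommGroup V] [NormedSpace ℝ V]
    [NormedAddCommGroup H] [InnerProductSpace ℝ H]
    (e : V →L[ℝ] H)
    (j : V → V →L[ℝ] ℝ) (hj : ∀ x v : V, j x v = (inner ℝ (e v) (e x) : ℝ))
    (a b : ℝ)
    (p q α : ℝ) (hp : 2 ≤ p) (hq : q = p / (p - 1)) (hα : 1 ≤ α)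
    (A : ℝ → V → V →L[ℝ] ℝ)
    (lam K₂ : ℝ → ℝ)
    (hlam_nonneg : ∀ s, 0 ≤ lam s) (hK₂_nonneg : ∀ s, 0 ≤ K₂ s)
    (hlam_int : IntegrableOn lam (Set.Icc a b))
    (hK₂_int : IntegrableOn K₂ (Set.Icc a b))
    (hgrowth : ∀ᵐ s ∂(volume.restrict (Set.Icc a b)), ∀ x : V,
      ‖A s x‖ ^ q ≤ α * lam s ^ q * ‖x‖ ^ p + lam s ^ (q - 1) * K₂ s) :
    ∃ C : ℝ, 0 < C ∧ ∀ x : V,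
      ‖j x - ∫ s in Set.Icc a b, A s x‖ ≤ C * (1 + ‖x‖ ^ (p - 1)) := by
  have hpq : p.HolderConjugate q := (Real.holderConjugate_iff_eq_conjExponent (by linarith)).2 hq
  set L := ∫ s in Set.Icc a b, lam s
  set K := ∫ s in Set.Icc a b, K₂ s
  have hL : 0 ≤ L := integral_nonneg hlam_nonneg
  have hK : 0 ≤ K := integral_nonneg hK₂_nonneg
  have hα' : 0 ≤ α ^ q⁻¹ := Real.rpow_nonneg (by linarith) _
  refine ⟨‖e‖ ^ 2 + α ^ q⁻¹ * L + L + K + 1, by positivity, fun x => ?_⟩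
  have hintegral : ‖∫ s in Set.Icc a b, A s x‖ ≤ α ^ q⁻¹ * ‖x‖ ^ (p - 1) * L + (L + K) := by
    rw [← integral_add hlam_int hK₂_int]
    refine norm_integral_le_of_norm_le_mul_add _ hlam_int (hlam_int.add hK₂_int) ?_
    filter_upwards [hgrowth] with s hs
    exact hpq.le_of_rpow_le_growth (by linarith) (hlam_nonneg s) (hK₂_nonneg s) (norm_nonneg x)
      (norm_nonneg _) (hs x)
  have hjx := e.norm_le_sq_opNorm_mul_of_apply_eq_inner (j x) x (hj x)
  have hx := Real.le_one_add_rpow (norm_nonneg x) (show 1 ≤ p - 1 by linarith)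
  have ht : 0 ≤ ‖x‖ ^ (p - 1) := Real.rpow_nonneg (norm_nonneg x) _
  calc ‖j x - ∫ s in Set.Icc a b, A s x‖
      ≤ ‖j x‖ + ‖∫ s in Set.Icc a b, A s x‖ := norm_sub_le _ _
    _ ≤ ‖e‖ ^ 2 * (1 + ‖x‖ ^ (p - 1)) + α ^ q⁻¹ * L * ‖x‖ ^ (p - 1) + (L + K) := by
      linarith [mul_le_mul_of_nonneg_left hx (sq_nonneg ‖e‖)]
    _ ≤ (‖e‖ ^ 2 + α ^ q⁻¹ * L + L + K + 1) * (1 + ‖x‖ ^ (p - 1)) := by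
      nlinarith [mul_nonneg (add_nonneg hL hK) ht]

/-- Growth estimate for the operator `D(x) = j(x) − ∫_a^b A(s,x) ds` arising in the
implicit time-discretization scheme (proof of Theorem 2.7). -/
theorem stmt_11
    {V H : Type*} [NormedAddCommGroup V] [NormedSpace ℝ V]
    [NormedAddCommGroup H] [InnerProductSpace ℝ H]
    (e : V →L[ℝ] H)
    (j : V → V →L[ℝ] ℝ) (hj : ∀ x v : V, j x v = (inner ℝ (e v) (e x) : ℝ))
    (a b : ℝ) (hab : a < b)
    (p q α : ℝ) (hp : 2 ≤ p) (hq : q = p / (p - 1)) (hα : 1 ≤ α)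
    (A : ℝ → V → V →L[ℝ] ℝ)
    (hint : ∀ x : V, IntegrableOn (fun s => A s x) (Set.Icc a b))
    (lam K₂ : ℝ → ℝ)
    (hlam_nonneg : ∀ s, 0 ≤ lam s) (hK₂_nonneg : ∀ s, 0 ≤ K₂ s)
    (hlam_int : IntegrableOn lam (Set.Icc a b))
    (hK₂_int : IntegrableOn K₂ (Set.Icc a b))
    (hgrowth : ∀ᵐ s ∂(volume.restrict (Set.Icc a b)), ∀ x : V,
      ‖A s x‖ ^ q ≤ α * lam s ^ q * ‖x‖ ^ p + lam s ^ (q - 1) * K₂ s) :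
    ∃ C : ℝ, 0 < C ∧ ∀ x : V,
      ‖j x - ∫ s in Set.Icc a b, A s x‖ ≤ C * (1 + ‖x‖ ^ (p - 1)) :=
  stmt_11_general e j hj a b p q α hp hq hα A lam K₂ hlam_nonneg hK₂_nonneg hlam_int hK₂_int hgrowth
end

section
/- Let V be a real Banach space, a < b reals, p ∈ [2, ∞), q = p/(p−1), α ≥ 1, and let A : [a, b] × V → V* be such that for each x ∈ V the map s ↦ A(s, x) is Bochner integrable on [a, b], for almost every s ∈ [a, b] the map A(s, ·) : V → V* is hemicontinuous, and there are Lebesgue integrable functions λ, K₂ : [a, b] → [0, ∞) with ‖A(s, x)‖_{V*}^q ≤ α λ(s)^q ‖x‖_V^p + λ(s)^{q−1} K₂(s) for almost every s and all x ∈ V. Then the map x ↦ ∫_a^b A(s, x) ds is hemicontinuous from V to V*: for all x, y, z ∈ V, ⟨∫_a^b A(s, x + εy) ds, z⟩ → ⟨∫_a^b A(s, x) ds, z⟩ as the real parameter ε → 0. -/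
open MeasureTheory Filter Topology

private lemma aux_rpow_add_le {u v q : ℝ} (hu : 0 ≤ u) (hv : 0 ≤ v) (hq : 1 ≤ q) :
    (u + v) ^ q⁻¹ ≤ u ^ q⁻¹ + v ^ q⁻¹ := by
  have hq0 : q ≠ 0 := by positivity
  lift u to NNReal using hu
  lift v to NNReal using hv
  have h := NNReal.rpow_add_rpow_le_add (u ^ (1 / q)) (v ^ (1 / q)) hq
  rw [← NNReal.rpow_mul, ← NNReal.rpow_mul, one_div_mul_cancel hq0,
    NNReal.rpow_one, NNReal.rpow_one, one_div] at h
  exact_mod_cast h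

/-- Hemicontinuity of the averaged operator `x ↦ ∫_a^b A(s,x) ds` arising in the
implicit time-discretization scheme (proof of Theorem 2.7). -/
theorem stmt_12
    {V : Type*} [NormedAddCommGroup V] [NormedSpace ℝ V]
    (a b : ℝ) (hab : a < b)
    (p q α : ℝ) (hp : 2 ≤ p) (hq : q = p / (p - 1)) (hα : 1 ≤ α)
    (A : ℝ → V → V →L[ℝ] ℝ)
    (hint : ∀ x : V, IntegrableOn (fun s => A s x) (Set.Icc a b))
    (hhemi : ∀ᵐ s ∂(volume.restrict (Set.Icc a b)), ∀ x y z : V,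
      Tendsto (fun ε : ℝ => A s (x + ε • y) z) (𝓝 0) (𝓝 (A s x z)))
    (lam K₂ : ℝ → ℝ)
    (hlam_nonneg : ∀ s, 0 ≤ lam s) (hK₂_nonneg : ∀ s, 0 ≤ K₂ s)
    (hlam_int : IntegrableOn lam (Set.Icc a b))
    (hK₂_int : IntegrableOn K₂ (Set.Icc a b))
    (hgrowth : ∀ᵐ s ∂(volume.restrict (Set.Icc a b)), ∀ x : V,
      ‖A s x‖ ^ q ≤ α * lam s ^ q * ‖x‖ ^ p + lam s ^ (q - 1) * K₂ s) :
    ∀ x y z : V,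
      Tendsto (fun ε : ℝ => (∫ s in Set.Icc a b, A s (x + ε • y)) z) (𝓝 0)
        (𝓝 ((∫ s in Set.Icc a b, A s x) z)) := by
  intro x y z
  have hp1 : (1 : ℝ) < p := by linarith
  have hp0 : (0 : ℝ) < p := by linarith
  have hpm1 : (0 : ℝ) < p - 1 := by linarith
  have hq0 : 0 < q := by rw [hq]; positivity
  have hq1 : 1 ≤ q := by
    rw [hq, le_div_iff₀ hpm1]; linarith
  have hqne : q ≠ 0 := ne_of_gt hq0
  have hqinv_le : q⁻¹ ≤ 1 := by
    rw [inv_le_one_iff₀]; right; exact hq1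
  set R : ℝ := ‖x‖ + ‖y‖ with hR
  have hR0 : 0 ≤ R := by positivity
  set bound : ℝ → ℝ := fun s => (α * R ^ (p / q) * lam s + lam s + K₂ s) * ‖z‖ with hbound
  -- the key norm bound
  have hkey : ∀ s, (∀ x : V, ‖A s x‖ ^ q ≤ α * lam s ^ q * ‖x‖ ^ p + lam s ^ (q - 1) * K₂ s) →
      ∀ u : V, ‖u‖ ≤ R → ‖A s u‖ ≤ α * R ^ (p / q) * lam s + lam s + K₂ s := by
    intro s hs u hu
    have hl := hlam_nonneg s
    have hk := hK₂_nonneg s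
    have h1 : ‖A s u‖ ^ q ≤ α * lam s ^ q * R ^ p + lam s ^ (q - 1) * K₂ s := by
      refine (hs u).trans ?_
      have : ‖u‖ ^ p ≤ R ^ p := Real.rpow_le_rpow (norm_nonneg u) hu hp0.le
      gcongr
    have h2 : ‖A s u‖ = (‖A s u‖ ^ q) ^ q⁻¹ :=
      (Real.rpow_rpow_inv (norm_nonneg _) hqne).symm
    have h3 : (‖A s u‖ ^ q) ^ q⁻¹ ≤ (α * lam s ^ q * R ^ p + lam s ^ (q - 1) * K₂ s) ^ q⁻¹ :=
      Real.rpow_le_rpow (by positivity) h1 (by positivity)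
    have h4 : (α * lam s ^ q * R ^ p + lam s ^ (q - 1) * K₂ s) ^ q⁻¹ ≤
        (α * lam s ^ q * R ^ p) ^ q⁻¹ + (lam s ^ (q - 1) * K₂ s) ^ q⁻¹ :=
      aux_rpow_add_le (by positivity) (by positivity) hq1
    have h5 : (α * lam s ^ q * R ^ p) ^ q⁻¹ ≤ α * R ^ (p / q) * lam s := by
      rw [Real.mul_rpow (by positivity) (by positivity),
        Real.mul_rpow (by positivity) (by positivity),
        Real.rpow_rpow_inv hl hqne]
      have hα' : α ^ q⁻¹ ≤ α := by
        calc α ^ q⁻¹ ≤ α ^ (1 : ℝ) := Real.rpow_le_rpow_of_exponent_le hα hqinv_le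
        _ = α := Real.rpow_one α
      have hRp : (R ^ p) ^ q⁻¹ = R ^ (p / q) := by
        rw [← Real.rpow_mul hR0, div_eq_mul_inv]
      rw [hRp]
      calc α ^ q⁻¹ * lam s * R ^ (p / q) ≤ α * lam s * R ^ (p / q) := by gcongr
      _ = α * R ^ (p / q) * lam s := by ring
    have h6 : (lam s ^ (q - 1) * K₂ s) ^ q⁻¹ ≤ lam s + K₂ s := by
      rw [Real.mul_rpow (by positivity) hk, ← Real.rpow_mul hl]
      have hsum : (q - 1) * q⁻¹ + q⁻¹ = 1 := by field_simp; ring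
      have hyoung := Real.geom_mean_le_arith_mean2_weighted
        (w₁ := (q - 1) * q⁻¹) (w₂ := q⁻¹) (p₁ := lam s) (p₂ := K₂ s)
        (mul_nonneg (by linarith) (by positivity)) (by positivity) hl hk hsum
      refine hyoung.trans ?_
      have h7 : (q - 1) * q⁻¹ ≤ 1 := by nlinarith [hsum, inv_nonneg.mpr hq0.le]
      have h8 : q⁻¹ ≤ 1 := hqinv_le
      nlinarith
    calc ‖A s u‖ = (‖A s u‖ ^ q) ^ q⁻¹ := h2
    _ ≤ (α * lam s ^ q * R ^ p + lam s ^ (q - 1) * K₂ s) ^ q⁻¹ := h3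
    _ ≤ (α * lam s ^ q * R ^ p) ^ q⁻¹ + (lam s ^ (q - 1) * K₂ s) ^ q⁻¹ := h4
    _ ≤ (α * R ^ (p / q) * lam s) + (lam s + K₂ s) := add_le_add h5 h6
    _ = α * R ^ (p / q) * lam s + lam s + K₂ s := by ring
  -- dominated convergence
  have hmeas : ∀ᶠ ε in 𝓝 (0 : ℝ), AEStronglyMeasurable
      (fun s => A s (x + ε • y) z) (volume.restrict (Set.Icc a b)) := by
    refine Eventually.of_forall fun ε => ?_
    exact (ContinuousLinearMap.apply ℝ ℝ z).continuous.comp_aestronglyMeasurable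
      (hint (x + ε • y)).aestronglyMeasurable
  have hb : ∀ᶠ ε in 𝓝 (0 : ℝ), ∀ᵐ s ∂(volume.restrict (Set.Icc a b)),
      ‖A s (x + ε • y) z‖ ≤ bound s := by
    have h1 : ∀ᶠ ε in 𝓝 (0 : ℝ), |ε| ≤ 1 := by
      have := eventually_abs_sub_lt (0 : ℝ) one_pos
      filter_upwards [this] with ε hε
      rw [sub_zero] at hε; exact hε.le
    filter_upwards [h1] with ε hε
    filter_upwards [hgrowth] with s hs
    have hu : ‖x + ε • y‖ ≤ R := by
      calc ‖x + ε • y‖ ≤ ‖x‖ + ‖ε • y‖ := norm_add_le _ _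
      _ = ‖x‖ + |ε| * ‖y‖ := by rw [norm_smul, Real.norm_eq_abs]
      _ ≤ ‖x‖ + 1 * ‖y‖ := by gcongr
      _ = R := by rw [hR]; ring
    calc ‖A s (x + ε • y) z‖ ≤ ‖A s (x + ε • y)‖ * ‖z‖ :=
          (A s (x + ε • y)).le_opNorm z
    _ ≤ (α * R ^ (p / q) * lam s + lam s + K₂ s) * ‖z‖ :=
        mul_le_mul_of_nonneg_right (hkey s hs _ hu) (norm_nonneg z)
  have hbint : Integrable bound (volume.restrict (Set.Icc a b)) := by
    have : IntegrableOn (fun s => α * R ^ (p / q) * lam s + lam s + K₂ s) (Set.Icc a b) :=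
      ((hlam_int.const_mul _).add hlam_int).add hK₂_int
    exact this.mul_const ‖z‖
  have hlim : ∀ᵐ s ∂(volume.restrict (Set.Icc a b)),
      Tendsto (fun ε : ℝ => A s (x + ε • y) z) (𝓝 0) (𝓝 (A s x z)) := by
    filter_upwards [hhemi] with s hs using hs x y z
  have key := tendsto_integral_filter_of_dominated_convergence bound hmeas hb hbint hlim
  have heq : (fun ε : ℝ => (∫ s in Set.Icc a b, A s (x + ε • y)) z)
      = fun ε : ℝ => ∫ s in Set.Icc a b, A s (x + ε • y) z :=
    funext fun ε => ContinuousLinearMap.integral_apply (hint (x + ε • y)) z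
  rw [heq, ContinuousLinearMap.integral_apply (hint x) z]
  exact key
end

section
/- Let X be a real Banach space, T > 0, q ∈ (1, ∞), let λ : (0, T] → (0, ∞) be Lebesgue integrable, and let g : (0, T] → X be strongly measurable with ∫_0^T λ(s)^{1−q} ‖g(s)‖_X^q ds < ∞. Then g is Bochner integrable on (0, T], and ∫_0^T λ(t) ‖∫_0^t g(s) ds‖_X^q dt ≤ (∫_0^T λ(s) ds)^q · ∫_0^T λ(s)^{1−q} ‖g(s)‖_X^q ds. -/
open MeasureTheory
open scoped ENNReal

private lemma memLp_of_integrable_rpow {α : Type*} {m : MeasurableSpace α} {μ : Measure α}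
    {E : Type*} [NormedAddCommGroup E] {f : α → E} {r : ℝ} (hr : 0 < r)
    (hmeas : AEStronglyMeasurable f μ) (h : Integrable (fun x => ‖f x‖ ^ r) μ) :
    MemLp f (ENNReal.ofReal r) μ := by
  have h0 : ENNReal.ofReal r ≠ 0 := by simp [ENNReal.ofReal_eq_zero, hr.not_ge]
  have htop : ENNReal.ofReal r ≠ ∞ := ENNReal.ofReal_ne_top
  refine (memLp_norm_rpow_iff hmeas h0 htop).mp ?_
  rw [ENNReal.toReal_ofReal hr.le, ENNReal.div_self h0 htop]
  exact memLp_one_iff_integrable.mpr h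

/-- Boundedness of the primitive operator `G(g)(t) = ∫_0^t g(s) ds` from the weighted
space `L^q((0,T]; X; λ^{1−q} dt)` into `L^q((0,T]; X; λ dt)` (Propositions 3.2/3.6). -/
theorem stmt_13
    {X : Type*} [NormedAddCommGroup X] [NormedSpace ℝ X] [CompleteSpace X]
    (T q : ℝ) (hT : 0 < T) (hq : 1 < q)
    (lam : ℝ → ℝ) (hlam_pos : ∀ s ∈ Set.Ioc 0 T, 0 < lam s)
    (hlam_int : IntegrableOn lam (Set.Ioc 0 T))
    (g : ℝ → X)
    (hg_meas : AEStronglyMeasurable g (volume.restrict (Set.Ioc 0 T)))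
    (hg_int : IntegrableOn (fun s => lam s ^ (1 - q) * ‖g s‖ ^ q) (Set.Ioc 0 T)) :
    IntegrableOn g (Set.Ioc 0 T) ∧
      ∫ t in Set.Ioc 0 T, lam t * ‖∫ s in Set.Ioc 0 t, g s‖ ^ q ≤
        (∫ s in Set.Ioc 0 T, lam s) ^ q *
          ∫ s in Set.Ioc 0 T, lam s ^ (1 - q) * ‖g s‖ ^ q := by
  have hq0 : (0:ℝ) < q := lt_trans one_pos hq
  have hqne : q ≠ 0 := hq0.ne'
  have hq1 : (0:ℝ) < q - 1 := sub_pos.mpr hq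
  set q' : ℝ := q / (q - 1) with hq'def
  have hpq : q.HolderConjugate q' := Real.HolderConjugate.conjExponent hq
  have hpq' : q'.HolderConjugate q := hpq.symm
  have hq'0 : (0:ℝ) < q' := hpq'.pos
  have e1 : 1 / q' * q' = 1 := one_div_mul_cancel hq'0.ne'
  have e2 : 1 / q' * q = q - 1 := by
    rw [hq'def, one_div_div]
    exact div_mul_cancel₀ _ hqne
  have e3 : -(1 / q') * q = 1 - q := by rw [neg_mul, e2, neg_sub]
  -- the weight is a.e. positive on the restricted measure
  have hlam_ae : ∀ᵐ s ∂(volume.restrict (Set.Ioc 0 T)), 0 < lam s :=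
    ae_restrict_of_forall_mem measurableSet_Ioc hlam_pos
  set f : ℝ → ℝ := fun s => lam s ^ (1 / q') with hfdef
  set F : ℝ → X := fun s => lam s ^ (-(1 / q')) • g s with hFdef
  have hf_meas : AEStronglyMeasurable f (volume.restrict (Set.Ioc 0 T)) :=
    (hlam_int.1.aemeasurable.pow aemeasurable_const).aestronglyMeasurable
  have hF_meas : AEStronglyMeasurable F (volume.restrict (Set.Ioc 0 T)) :=
    ((hlam_int.1.aemeasurable.pow aemeasurable_const).aestronglyMeasurable).smul hg_meas
  -- ‖f‖ ^ q' = lam a.e.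
  have hf_eq : (fun s => ‖f s‖ ^ q') =ᵐ[volume.restrict (Set.Ioc 0 T)] lam := by
    filter_upwards [hlam_ae] with s hs
    rw [hfdef]
    simp only
    rw [Real.norm_eq_abs, abs_of_nonneg (Real.rpow_nonneg hs.le _), ← Real.rpow_mul hs.le, e1,
      Real.rpow_one]
  have hf_int : Integrable (fun s => ‖f s‖ ^ q') (volume.restrict (Set.Ioc 0 T)) :=
    hlam_int.congr hf_eq.symm
  have hf_mem : MemLp f (ENNReal.ofReal q') (volume.restrict (Set.Ioc 0 T)) :=
    memLp_of_integrable_rpow hq'0 hf_meas hf_int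
  -- ‖F‖ ^ q = lam ^ (1 - q) * ‖g‖ ^ q a.e.
  have hF_eq : (fun s => ‖F s‖ ^ q) =ᵐ[volume.restrict (Set.Ioc 0 T)]
      (fun s => lam s ^ (1 - q) * ‖g s‖ ^ q) := by
    filter_upwards [hlam_ae] with s hs
    rw [hFdef]
    simp only
    rw [norm_smul, Real.norm_eq_abs, abs_of_nonneg (Real.rpow_nonneg hs.le _),
      Real.mul_rpow (Real.rpow_nonneg hs.le _) (norm_nonneg _), ← Real.rpow_mul hs.le, e3]
  have hF_int : Integrable (fun s => ‖F s‖ ^ q) (volume.restrict (Set.Ioc 0 T)) :=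
    hg_int.congr hF_eq.symm
  have hF_mem : MemLp F (ENNReal.ofReal q) (volume.restrict (Set.Ioc 0 T)) :=
    memLp_of_integrable_rpow hq0 hF_meas hF_int
  -- f • F = g a.e.
  have hfF_eq : (f • F) =ᵐ[volume.restrict (Set.Ioc 0 T)] g := by
    filter_upwards [hlam_ae] with s hs
    rw [Pi.smul_apply', hfdef, hFdef]
    simp only
    rw [smul_smul, ← Real.rpow_add hs, add_neg_cancel, Real.rpow_zero, one_smul]
  -- the exponent relation in ℝ≥0∞
  have hpqr : (1:ℝ≥0∞) / 1 = 1 / ENNReal.ofReal q' + 1 / ENNReal.ofReal q := by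
    simp only [one_div, inv_one]
    rw [← ENNReal.ofReal_inv_of_pos hq'0, ← ENNReal.ofReal_inv_of_pos hq0,
      ← ENNReal.ofReal_add (by positivity) (by positivity), hpq'.inv_add_inv_eq_one,
      ENNReal.ofReal_one]
  -- integrability of g
  have hg_integrable : IntegrableOn g (Set.Ioc 0 T) := by
    have : MemLp (f • F) 1 (volume.restrict (Set.Ioc 0 T)) := hF_mem.smul hf_mem (hpqr := ⟨by simp only [one_div, inv_one] at hpqr ⊢; exact hpqr.symm⟩)
    exact (memLp_one_iff_integrable.mp this).congr hfF_eq
  refine ⟨hg_integrable, ?_⟩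
  set Λ : ℝ := ∫ s in Set.Ioc 0 T, lam s with hΛdef
  set Φ : ℝ := ∫ s in Set.Ioc 0 T, lam s ^ (1 - q) * ‖g s‖ ^ q with hΦdef
  have hΛ0 : 0 ≤ Λ := integral_nonneg_of_ae (hlam_ae.mono fun s hs => hs.le)
  have hΦ0 : 0 ≤ Φ := integral_nonneg_of_ae <| by
    filter_upwards [hlam_ae] with s hs
    exact mul_nonneg (Real.rpow_nonneg hs.le _) (Real.rpow_nonneg (norm_nonneg _) _)
  -- key pointwise bound
  have key : ∀ t ∈ Set.Ioc 0 T, ‖∫ s in Set.Ioc 0 t, g s‖ ^ q ≤ Λ ^ (q - 1) * Φ := by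
    intro t ht
    have hsub : Set.Ioc 0 t ⊆ Set.Ioc 0 T := Set.Ioc_subset_Ioc_right ht.2
    have hres : volume.restrict (Set.Ioc 0 t) ≤ volume.restrict (Set.Ioc 0 T) :=
      Measure.restrict_mono hsub le_rfl
    have hlam_ae_t : ∀ᵐ s ∂(volume.restrict (Set.Ioc 0 t)), 0 < lam s :=
      ae_restrict_of_forall_mem measurableSet_Ioc (fun s hs => hlam_pos s (hsub hs))
    have hf_mem_t : MemLp f (ENNReal.ofReal q') (volume.restrict (Set.Ioc 0 t)) :=
      hf_mem.mono_measure hres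
    have hF_mem_t : MemLp F (ENNReal.ofReal q) (volume.restrict (Set.Ioc 0 t)) :=
      hF_mem.mono_measure hres
    have hf_nonneg : 0 ≤ᵐ[volume.restrict (Set.Ioc 0 t)] f :=
      hlam_ae_t.mono fun s hs => Real.rpow_nonneg hs.le _
    have hFn_nonneg : 0 ≤ᵐ[volume.restrict (Set.Ioc 0 t)] (fun s => ‖F s‖) :=
      Filter.Eventually.of_forall fun s => norm_nonneg _
    have holder := integral_mul_le_Lp_mul_Lq_of_nonneg hpq' hf_nonneg hFn_nonneg
      hf_mem_t hF_mem_t.norm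
    -- rewrite the three integrals
    have hL : ∫ s in Set.Ioc 0 t, f s * ‖F s‖ = ∫ s in Set.Ioc 0 t, ‖g s‖ := by
      refine integral_congr_ae ?_
      filter_upwards [hlam_ae_t] with s hs
      rw [hfdef, hFdef]
      simp only
      rw [norm_smul, Real.norm_eq_abs, abs_of_nonneg (Real.rpow_nonneg hs.le _), ← mul_assoc,
        ← Real.rpow_add hs, add_neg_cancel, Real.rpow_zero, one_mul]
    have hR1 : ∫ s in Set.Ioc 0 t, f s ^ q' = ∫ s in Set.Ioc 0 t, lam s := by
      refine integral_congr_ae ?_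
      filter_upwards [hlam_ae_t] with s hs
      rw [hfdef]
      simp only
      rw [← Real.rpow_mul hs.le, e1, Real.rpow_one]
    have hR2 : ∫ s in Set.Ioc 0 t, ‖F s‖ ^ q =
        ∫ s in Set.Ioc 0 t, lam s ^ (1 - q) * ‖g s‖ ^ q := by
      refine integral_congr_ae ?_
      filter_upwards [hlam_ae_t] with s hs
      rw [hFdef]
      simp only
      rw [norm_smul, Real.norm_eq_abs, abs_of_nonneg (Real.rpow_nonneg hs.le _),
        Real.mul_rpow (Real.rpow_nonneg hs.le _) (norm_nonneg _), ← Real.rpow_mul hs.le, e3]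
    rw [hL, hR1, hR2] at holder
    -- monotonicity of the two integrals in the domain
    have hmono1 : ∫ s in Set.Ioc 0 t, lam s ≤ Λ :=
      setIntegral_mono_set hlam_int (hlam_ae.mono fun s hs => hs.le)
        (HasSubset.Subset.eventuallyLE hsub)
    have hmono2 : ∫ s in Set.Ioc 0 t, lam s ^ (1 - q) * ‖g s‖ ^ q ≤ Φ := by
      refine setIntegral_mono_set hg_int ?_ (HasSubset.Subset.eventuallyLE hsub)
      filter_upwards [hlam_ae] with s hs
      exact mul_nonneg (Real.rpow_nonneg hs.le _) (Real.rpow_nonneg (norm_nonneg _) _)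
    have hint1_0 : 0 ≤ ∫ s in Set.Ioc 0 t, lam s :=
      integral_nonneg_of_ae (hlam_ae_t.mono fun s hs => hs.le)
    have hint2_0 : 0 ≤ ∫ s in Set.Ioc 0 t, lam s ^ (1 - q) * ‖g s‖ ^ q :=
      integral_nonneg_of_ae <| by
        filter_upwards [hlam_ae_t] with s hs
        exact mul_nonneg (Real.rpow_nonneg hs.le _) (Real.rpow_nonneg (norm_nonneg _) _)
    have hbound : ∫ s in Set.Ioc 0 t, ‖g s‖ ≤ Λ ^ (1 / q') * Φ ^ (1 / q) := by
      refine holder.trans ?_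
      exact mul_le_mul (Real.rpow_le_rpow hint1_0 hmono1 (by positivity))
        (Real.rpow_le_rpow hint2_0 hmono2 (by positivity))
        (Real.rpow_nonneg hint2_0 _) (Real.rpow_nonneg hΛ0 _)
    calc ‖∫ s in Set.Ioc 0 t, g s‖ ^ q ≤ (∫ s in Set.Ioc 0 t, ‖g s‖) ^ q :=
          Real.rpow_le_rpow (norm_nonneg _) (norm_integral_le_integral_norm _) hq0.le
      _ ≤ (Λ ^ (1 / q') * Φ ^ (1 / q)) ^ q := by
          refine Real.rpow_le_rpow (integral_nonneg fun s => norm_nonneg _) hbound hq0.le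
      _ = Λ ^ (q - 1) * Φ := by
          rw [Real.mul_rpow (Real.rpow_nonneg hΛ0 _) (Real.rpow_nonneg hΦ0 _),
            ← Real.rpow_mul hΛ0, ← Real.rpow_mul hΦ0, e2, one_div_mul_cancel hqne,
            Real.rpow_one]
  -- integrate the pointwise bound
  have hmajor : Integrable (fun t => lam t * (Λ ^ (q - 1) * Φ))
      (volume.restrict (Set.Ioc 0 T)) := hlam_int.mul_const _
  have hle : ∫ t in Set.Ioc 0 T, lam t * ‖∫ s in Set.Ioc 0 t, g s‖ ^ q ≤
      ∫ t in Set.Ioc 0 T, lam t * (Λ ^ (q - 1) * Φ) := by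
    refine integral_mono_of_nonneg ?_ hmajor ?_
    · filter_upwards [hlam_ae] with t htp
      exact mul_nonneg htp.le (Real.rpow_nonneg (norm_nonneg _) _)
    · filter_upwards [hlam_ae, ae_restrict_mem measurableSet_Ioc] with t htp htmem
      exact mul_le_mul_of_nonneg_left (key t htmem) htp.le
  refine hle.trans ?_
  rw [integral_mul_const]
  have : Λ * (Λ ^ (q - 1) * Φ) = Λ ^ q * Φ := by
    rw [← mul_assoc]
    congr 1
    nth_rewrite 1 [← Real.rpow_one Λ]
    rw [← Real.rpow_add' hΛ0 (by rw [add_sub_cancel]; exact hqne)]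
    congr 1
    ring
  rw [this]
end

section
/- Let V be a real Banach space, H a real Hilbert space, r ∈ ℕ, T > 0, p ∈ [2, ∞), q = p/(p−1), α ≥ 1. Let λ : (0, T] → (0, ∞) be measurable, K₂ : (0, T] → [0, ∞) Lebesgue integrable, and let A : (0, T] × V → V* and B¹, …, Bʳ : (0, T] × V → H be such that for almost every t ∈ (0, T] and all x, y ∈ V: 2⟨x − y, A(t, x) − A(t, y)⟩ + Σ_{j=1}^r ‖Bʲ(t, x) − Bʲ(t, y)‖_H² ≤ 0 and ‖A(t, x)‖_{V*}^q ≤ α λ(t)^q ‖x‖_V^p + λ(t)^{q−1} K₂(t). Let y, z : (0, T] → V be strongly measurable with ∫_0^T ‖y_t‖_V^p λ(t) dt < ∞, ∫_0^T ‖z_t‖_V^p λ(t) dt < ∞, and such that t ↦ ⟨y_t − z_t, A(t, y_t) − A(t, z_t)⟩ and t ↦ Bʲ(t, y_t), Bʲ(t, z_t) are measurable. Then Σ_{j=1}^r ∫_0^T ‖Bʲ(t, y_t) − Bʲ(t, z_t)‖_H² dt ≤ 2 (∫_0^T ‖y_t − z_t‖_V^p λ(t) dt)^{1/p} · (2^{q−1}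 ∫_0^T [α λ(t)(‖y_t‖_V^p + ‖z_t‖_V^p) + 2 K₂(t)] dt)^{1/q}. -/
open MeasureTheory

open scoped NNReal ENNReal

lemma helper_add_rpow {a b q : ℝ} (ha : 0 ≤ a) (hb : 0 ≤ b) (hq : 1 ≤ q) :
    (a + b) ^ q ≤ 2 ^ (q - 1) * (a ^ q + b ^ q) := by
  have h := NNReal.rpow_add_le_mul_rpow_add_rpow a.toNNReal b.toNNReal hq
  have h' : (((a.toNNReal + b.toNNReal) ^ q : ℝ≥0) : ℝ)
      ≤ (((2:ℝ≥0) ^ (q-1) * (a.toNNReal ^ q + b.toNNReal ^ q) : ℝ≥0) : ℝ) := by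
    exact_mod_cast h
  rw [NNReal.coe_rpow, NNReal.coe_mul, NNReal.coe_rpow, NNReal.coe_add, NNReal.coe_add,
    NNReal.coe_rpow, NNReal.coe_rpow, Real.coe_toNNReal a ha, Real.coe_toNNReal b hb] at h'
  simpa using h'

/-- The L² continuity estimate (T3n) for the diffusion coefficients `B` in terms of the
`L^p(λ)`-distance of the arguments, from the Appendix (proof of Theorem 2.5). -/
theorem stmt_15
    {V H : Type*} [NormedAddCommGroup V] [NormedSpace ℝ V] [CompleteSpace V]
    [NormedAddCommGroup H] [InnerProductSpace ℝ H]
    (r : ℕ) (T p q α : ℝ) (hT : 0 < T) (hp : 2 ≤ p) (hq : q = p / (p - 1)) (hα : 1 ≤ α)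
    (lam K₂ : ℝ → ℝ)
    (hlam_meas : Measurable lam) (hlam_pos : ∀ t ∈ Set.Ioc 0 T, 0 < lam t)
    (hK₂_int : IntegrableOn K₂ (Set.Ioc 0 T)) (hK₂_nonneg : ∀ t, 0 ≤ K₂ t)
    (A : ℝ → V → V →L[ℝ] ℝ) (B : Fin r → ℝ → V → H)
    (hmono : ∀ᵐ t ∂(volume.restrict (Set.Ioc 0 T)), ∀ x y : V,
      2 * (A t x - A t y) (x - y) + ∑ i, ‖B i t x - B i t y‖ ^ 2 ≤ 0)
    (hgrowth : ∀ᵐ t ∂(volume.restrict (Set.Ioc 0 T)), ∀ x : V,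
      ‖A t x‖ ^ q ≤ α * lam t ^ q * ‖x‖ ^ p + lam t ^ (q - 1) * K₂ t)
    (y z : ℝ → V)
    (hy_meas : AEStronglyMeasurable y (volume.restrict (Set.Ioc 0 T)))
    (hz_meas : AEStronglyMeasurable z (volume.restrict (Set.Ioc 0 T)))
    (hy_int : IntegrableOn (fun t => ‖y t‖ ^ p * lam t) (Set.Ioc 0 T))
    (hz_int : IntegrableOn (fun t => ‖z t‖ ^ p * lam t) (Set.Ioc 0 T))
    (hmeas1 : AEStronglyMeasurable
      (fun t => (A t (y t) - A t (z t)) (y t - z t)) (volume.restrict (Set.Ioc 0 T)))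
    (hmeas2 : ∀ i : Fin r, AEStronglyMeasurable
      (fun t => B i t (y t)) (volume.restrict (Set.Ioc 0 T)))
    (hmeas3 : ∀ i : Fin r, AEStronglyMeasurable
      (fun t => B i t (z t)) (volume.restrict (Set.Ioc 0 T))) :
    ∑ i, ∫ t in Set.Ioc 0 T, ‖B i t (y t) - B i t (z t)‖ ^ 2 ≤
      2 * (∫ t in Set.Ioc 0 T, ‖y t - z t‖ ^ p * lam t) ^ (1 / p) *
        ((2 : ℝ) ^ (q - 1) *
          ∫ t in Set.Ioc 0 T,
            (α * lam t * (‖y t‖ ^ p + ‖z t‖ ^ p) + 2 * K₂ t)) ^ (1 / q) := by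
  set μ := volume.restrict (Set.Ioc 0 T) with hμ
  have hp1 : 1 < p := by linarith
  have hp0 : 0 < p := by linarith
  have hpq : p.HolderConjugate q := (Real.holderConjugate_iff_eq_conjExponent hp1).2 hq
  have hq1 : 1 < q := hpq.symm.lt
  have hq0 : 0 < q := by linarith
  have hpm : p - 1 ≠ 0 := by intro h; rw [sub_eq_zero] at h; linarith
  have hqp : (1 / p) * q = q - 1 := by
    rw [hq]; field_simp; ring
  have hlam_ae : ∀ᵐ t ∂μ, 0 < lam t :=
    (ae_restrict_iff' measurableSet_Ioc).2 (ae_of_all _ hlam_pos)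
  -- abbreviations
  set S : ℝ → ℝ := fun t => ∑ i, ‖B i t (y t) - B i t (z t)‖ ^ 2 with hS
  set g₀ : ℝ → ℝ := fun t => -((A t (y t) - A t (z t)) (y t - z t)) with hg₀
  have hg₀_meas : AEMeasurable g₀ μ := hmeas1.aemeasurable.neg
  have hS_nonneg : ∀ t, 0 ≤ S t := fun t =>
    Finset.sum_nonneg fun i _ => pow_nonneg (norm_nonneg _) 2
  have hkey : ∀ᵐ t ∂μ, S t ≤ 2 * g₀ t ∧ 0 ≤ g₀ t := by
    filter_upwards [hmono] with t ht
    have h1 := ht (y t) (z t)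
    constructor
    · simp only [hg₀]; linarith
    · have h2 := hS_nonneg t
      simp only [hg₀]
      simp only [hS] at h2
      linarith
  have hbound : ∀ t, g₀ t ≤ ‖A t (y t) - A t (z t)‖ * ‖y t - z t‖ := by
    intro t
    have h1 : -((A t (y t) - A t (z t)) (y t - z t)) ≤ ‖(A t (y t) - A t (z t)) (y t - z t)‖ := by
      rw [Real.norm_eq_abs]; exact neg_le_abs _
    exact h1.trans ((A t (y t) - A t (z t)).le_opNorm _)
  set d : ℝ → ℝ := fun t => ‖y t - z t‖ * lam t ^ (1 / p) with hd
  set f : ℝ → ℝ≥0∞ := fun t => ENNReal.ofReal (d t) with hf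
  set g : ℝ → ℝ≥0∞ := fun t => ENNReal.ofReal (g₀ t) / f t with hgdef
  have hd_meas : AEMeasurable d μ :=
    ((hy_meas.sub hz_meas).norm.aemeasurable).mul
      ((Real.continuous_rpow_const (by positivity)).measurable.comp hlam_meas).aemeasurable
  have hf_meas : AEMeasurable f μ := hd_meas.ennreal_ofReal
  have hg_meas : AEMeasurable g μ := hg₀_meas.ennreal_ofReal.div hf_meas
  set M₀ : ℝ → ℝ := fun t => α * lam t * (‖y t‖ ^ p + ‖z t‖ ^ p) + 2 * K₂ t with hM₀
  have h2qnn : (0:ℝ) ≤ 2 ^ (q - 1) := Real.rpow_nonneg (by norm_num) _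
  -- a.e. identities
  have h3 : ∀ᵐ t ∂μ, f t * g t = ENNReal.ofReal (g₀ t) := by
    filter_upwards [hkey, hlam_ae] with t ht hlt
    obtain ⟨-, hg0⟩ := ht
    by_cases hyz : ‖y t - z t‖ = 0
    · have hg00 : g₀ t = 0 := le_antisymm (by simpa [hyz] using hbound t) hg0
      have hd0 : d t = 0 := by simp [hd, hyz]
      simp [hgdef, hf, hd0, hg00]
    · have hdpos : 0 < d t := by
        have h1 := Real.rpow_pos_of_pos hlt (1 / p)
        have hn : 0 < ‖y t - z t‖ := lt_of_le_of_ne (norm_nonneg _) (Ne.symm hyz)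
        exact mul_pos hn h1
      have hfne : f t ≠ 0 := by
        simp only [hf]
        exact (ENNReal.ofReal_pos.2 hdpos).ne'
      have hftop : f t ≠ ⊤ := ENNReal.ofReal_ne_top
      simp only [hgdef]
      exact ENNReal.mul_div_cancel hfne hftop
  have h4 : ∀ᵐ t ∂μ, g t ^ q ≤ ENNReal.ofReal (2 ^ (q - 1) * M₀ t) := by
    filter_upwards [hkey, hlam_ae, hgrowth] with t ht hlt hgr
    obtain ⟨-, hg0⟩ := ht
    by_cases hyz : ‖y t - z t‖ = 0
    · have hg00 : g₀ t = 0 := le_antisymm (by simpa [hyz] using hbound t) hg0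
      have hgz : g t = 0 := by simp [hgdef, hg00]
      rw [hgz, ENNReal.zero_rpow_of_pos hq0]
      exact zero_le
    · have hc : 0 < lam t ^ (1 / p) := Real.rpow_pos_of_pos hlt _
      have hn : 0 < ‖y t - z t‖ := lt_of_le_of_ne (norm_nonneg _) (Ne.symm hyz)
      have hdpos : 0 < d t := mul_pos hn hc
      have hgeq : g t = ENNReal.ofReal (g₀ t / d t) := by
        simp only [hgdef, hf]
        rw [ENNReal.ofReal_div_of_pos hdpos]
      rw [hgeq, ENNReal.ofReal_rpow_of_nonneg (div_nonneg hg0 hdpos.le) hq0.le]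
      apply ENNReal.ofReal_le_ofReal
      -- the real inequality
      have h5 : g₀ t / d t ≤ ‖A t (y t) - A t (z t)‖ / lam t ^ (1 / p) := by
        rw [div_le_div_iff₀ hdpos hc]
        calc g₀ t * lam t ^ (1 / p)
            ≤ (‖A t (y t) - A t (z t)‖ * ‖y t - z t‖) * lam t ^ (1 / p) :=
              mul_le_mul_of_nonneg_right (hbound t) hc.le
          _ = ‖A t (y t) - A t (z t)‖ * d t := by simp only [hd]; ring
      have h6 : (g₀ t / d t) ^ q ≤ (‖A t (y t) - A t (z t)‖ / lam t ^ (1 / p)) ^ q :=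
        Real.rpow_le_rpow (div_nonneg hg0 hdpos.le) h5 hq0.le
      have hcq : (lam t ^ (1 / p)) ^ q = lam t ^ (q - 1) := by
        rw [← Real.rpow_mul hlt.le, hqp]
      have h7 : (‖A t (y t) - A t (z t)‖ / lam t ^ (1 / p)) ^ q
          = ‖A t (y t) - A t (z t)‖ ^ q / lam t ^ (q - 1) := by
        rw [Real.div_rpow (norm_nonneg _) hc.le, hcq]
      have hFq : ‖A t (y t) - A t (z t)‖ ^ q
          ≤ 2 ^ (q - 1) * ((α * lam t ^ q * ‖y t‖ ^ p + lam t ^ (q - 1) * K₂ t)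
            + (α * lam t ^ q * ‖z t‖ ^ p + lam t ^ (q - 1) * K₂ t)) := by
        have s1 : ‖A t (y t) - A t (z t)‖ ^ q ≤ (‖A t (y t)‖ + ‖A t (z t)‖) ^ q :=
          Real.rpow_le_rpow (norm_nonneg _) (norm_sub_le _ _) hq0.le
        have s2 := helper_add_rpow (norm_nonneg (A t (y t))) (norm_nonneg (A t (z t))) hq1.le
        have s3 : ‖A t (y t)‖ ^ q + ‖A t (z t)‖ ^ q
            ≤ (α * lam t ^ q * ‖y t‖ ^ p + lam t ^ (q - 1) * K₂ t)
              + (α * lam t ^ q * ‖z t‖ ^ p + lam t ^ (q - 1) * K₂ t) :=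
          add_le_add (hgr (y t)) (hgr (z t))
        calc ‖A t (y t) - A t (z t)‖ ^ q
            ≤ (‖A t (y t)‖ + ‖A t (z t)‖) ^ q := s1
          _ ≤ 2 ^ (q - 1) * (‖A t (y t)‖ ^ q + ‖A t (z t)‖ ^ q) := s2
          _ ≤ _ := mul_le_mul_of_nonneg_left s3 h2qnn
      have hqm1pos : 0 < lam t ^ (q - 1) := Real.rpow_pos_of_pos hlt _
      have hsplit : lam t ^ q = lam t ^ (q - 1) * lam t := by
        conv_lhs => rw [show q = (q - 1) + 1 by ring]
        rw [Real.rpow_add hlt, Real.rpow_one]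
      calc (g₀ t / d t) ^ q
          ≤ ‖A t (y t) - A t (z t)‖ ^ q / lam t ^ (q - 1) := by rw [← h7]; exact h6
        _ ≤ (2 ^ (q - 1) * ((α * lam t ^ q * ‖y t‖ ^ p + lam t ^ (q - 1) * K₂ t)
              + (α * lam t ^ q * ‖z t‖ ^ p + lam t ^ (q - 1) * K₂ t))) / lam t ^ (q - 1) :=
            (div_le_div_iff_of_pos_right hqm1pos).2 hFq
        _ = 2 ^ (q - 1) * M₀ t := by
            rw [hsplit]
            simp only [hM₀]
            field_simp
            ring
  -- integrability of the L^p distance integrand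
  have hyz_dom : ∀ᵐ t ∂μ, ‖‖y t - z t‖ ^ p * lam t‖
      ≤ 2 ^ (p - 1) * (‖y t‖ ^ p * lam t + ‖z t‖ ^ p * lam t) := by
    filter_upwards [hlam_ae] with t hlt
    have hnn : 0 ≤ ‖y t - z t‖ ^ p * lam t :=
      mul_nonneg (Real.rpow_nonneg (norm_nonneg _) _) hlt.le
    rw [Real.norm_eq_abs, abs_of_nonneg hnn]
    have s1 : ‖y t - z t‖ ^ p ≤ (‖y t‖ + ‖z t‖) ^ p :=
      Real.rpow_le_rpow (norm_nonneg _) (norm_sub_le _ _) hp0.le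
    have s2 := helper_add_rpow (norm_nonneg (y t)) (norm_nonneg (z t)) (by linarith : 1 ≤ p)
    have s3 : ‖y t - z t‖ ^ p ≤ 2 ^ (p - 1) * (‖y t‖ ^ p + ‖z t‖ ^ p) := s1.trans s2
    calc ‖y t - z t‖ ^ p * lam t ≤ (2 ^ (p - 1) * (‖y t‖ ^ p + ‖z t‖ ^ p)) * lam t :=
          mul_le_mul_of_nonneg_right s3 hlt.le
      _ = 2 ^ (p - 1) * (‖y t‖ ^ p * lam t + ‖z t‖ ^ p * lam t) := by ring
  have hI₁_meas : AEStronglyMeasurable (fun t => ‖y t - z t‖ ^ p * lam t) μ := by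
    apply AEMeasurable.aestronglyMeasurable
    exact (((hy_meas.sub hz_meas).norm.aemeasurable).pow_const p).mul hlam_meas.aemeasurable
  have hI₁_int : IntegrableOn (fun t => ‖y t - z t‖ ^ p * lam t) (Set.Ioc 0 T) := by
    apply Integrable.mono'
      (((hy_int.add hz_int).const_mul ((2:ℝ) ^ (p - 1)))) hI₁_meas hyz_dom
  have hI₁_nonneg_ae : ∀ᵐ t ∂μ, 0 ≤ ‖y t - z t‖ ^ p * lam t := by
    filter_upwards [hlam_ae] with t hlt
    exact mul_nonneg (Real.rpow_nonneg (norm_nonneg _) _) hlt.le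
  set I₁ := ∫ t in Set.Ioc 0 T, ‖y t - z t‖ ^ p * lam t with hI₁def
  have hI₁_nonneg : 0 ≤ I₁ := integral_nonneg_of_ae hI₁_nonneg_ae
  -- integrability of M₀
  have hM₀_int : IntegrableOn M₀ (Set.Ioc 0 T) := by
    have h1 : Integrable (fun t => α * (‖y t‖ ^ p * lam t + ‖z t‖ ^ p * lam t) + 2 * K₂ t) μ :=
      ((hy_int.add hz_int).const_mul α).add (hK₂_int.const_mul 2)
    apply h1.congr
    filter_upwards with t
    simp only [hM₀]; ring
  have hM₀_nonneg_ae : ∀ᵐ t ∂μ, 0 ≤ M₀ t := by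
    filter_upwards [hlam_ae] with t hlt
    have : 0 ≤ α * lam t * (‖y t‖ ^ p + ‖z t‖ ^ p) := by
      apply mul_nonneg (mul_nonneg (by linarith) hlt.le)
      exact add_nonneg (Real.rpow_nonneg (norm_nonneg _) _) (Real.rpow_nonneg (norm_nonneg _) _)
    have h2 := hK₂_nonneg t
    simp only [hM₀]; linarith
  set I₂ := ∫ t in Set.Ioc 0 T, M₀ t with hI₂def
  have hI₂_nonneg : 0 ≤ I₂ := integral_nonneg_of_ae hM₀_nonneg_ae
  -- lintegral computations
  have hF : ∫⁻ t, f t ^ p ∂μ = ENNReal.ofReal I₁ := by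
    have e1 : ∀ᵐ t ∂μ, f t ^ p = ENNReal.ofReal (‖y t - z t‖ ^ p * lam t) := by
      filter_upwards [hlam_ae] with t hlt
      have hd0 : 0 ≤ d t := mul_nonneg (norm_nonneg _) (Real.rpow_pos_of_pos hlt _).le
      simp only [hf]
      rw [ENNReal.ofReal_rpow_of_nonneg hd0 hp0.le]
      congr 1
      simp only [hd]
      rw [Real.mul_rpow (norm_nonneg _) (Real.rpow_pos_of_pos hlt _).le,
        ← Real.rpow_mul hlt.le, one_div_mul_cancel hp0.ne', Real.rpow_one]
    rw [lintegral_congr_ae e1,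
      ← ofReal_integral_eq_lintegral_ofReal hI₁_int hI₁_nonneg_ae]
  have hG : ∫⁻ t, g t ^ q ∂μ ≤ ENNReal.ofReal (2 ^ (q - 1) * I₂) := by
    calc ∫⁻ t, g t ^ q ∂μ ≤ ∫⁻ t, ENNReal.ofReal (2 ^ (q - 1) * M₀ t) ∂μ :=
          lintegral_mono_ae h4
      _ = ENNReal.ofReal (∫ t in Set.Ioc 0 T, 2 ^ (q - 1) * M₀ t) := by
          rw [← ofReal_integral_eq_lintegral_ofReal (hM₀_int.const_mul _)]
          filter_upwards [hM₀_nonneg_ae] with t h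
          exact mul_nonneg h2qnn h
      _ = ENNReal.ofReal (2 ^ (q - 1) * I₂) := by
          rw [integral_const_mul]
  -- Hölder
  have hHold : ∫⁻ t, ENNReal.ofReal (g₀ t) ∂μ
      ≤ ENNReal.ofReal I₁ ^ (1 / p) * ENNReal.ofReal (2 ^ (q - 1) * I₂) ^ (1 / q) := by
    have e0 : ∫⁻ t, ENNReal.ofReal (g₀ t) ∂μ = ∫⁻ t, (f * g) t ∂μ :=
      lintegral_congr_ae (h3.mono fun t ht => ht.symm)
    rw [e0]
    calc ∫⁻ t, (f * g) t ∂μ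
        ≤ (∫⁻ t, f t ^ p ∂μ) ^ (1 / p) * (∫⁻ t, g t ^ q ∂μ) ^ (1 / q) :=
          ENNReal.lintegral_mul_le_Lp_mul_Lq μ hpq hf_meas hg_meas
      _ ≤ ENNReal.ofReal I₁ ^ (1 / p) * ENNReal.ofReal (2 ^ (q - 1) * I₂) ^ (1 / q) := by
          rw [hF]
          exact mul_le_mul_right (ENNReal.rpow_le_rpow hG (by positivity)) _
  set R : ℝ≥0∞ := 2 * (ENNReal.ofReal I₁ ^ (1 / p) * ENNReal.ofReal (2 ^ (q - 1) * I₂) ^ (1 / q))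
    with hR
  have hR_ne_top : R ≠ ⊤ := by
    apply ENNReal.mul_ne_top (by norm_num)
    exact ENNReal.mul_ne_top
      (ENNReal.rpow_ne_top_of_nonneg (by positivity) ENNReal.ofReal_ne_top)
      (ENNReal.rpow_ne_top_of_nonneg (by positivity) ENNReal.ofReal_ne_top)
  set L := ∫⁻ t, ENNReal.ofReal (S t) ∂μ with hL
  have hLR : L ≤ R := by
    have step1 : L ≤ ∫⁻ t, 2 * ENNReal.ofReal (g₀ t) ∂μ := by
      apply lintegral_mono_ae
      filter_upwards [hkey] with t ht
      obtain ⟨h1, -⟩ := ht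
      calc ENNReal.ofReal (S t) ≤ ENNReal.ofReal (2 * g₀ t) := ENNReal.ofReal_le_ofReal h1
        _ = 2 * ENNReal.ofReal (g₀ t) := by
            rw [ENNReal.ofReal_mul (by norm_num)]
            norm_num
    have step2 : ∫⁻ t, 2 * ENNReal.ofReal (g₀ t) ∂μ = 2 * ∫⁻ t, ENNReal.ofReal (g₀ t) ∂μ :=
      lintegral_const_mul' _ _ (by norm_num)
    rw [hR]
    calc L ≤ 2 * ∫⁻ t, ENNReal.ofReal (g₀ t) ∂μ := by rw [← step2]; exact step1
      _ ≤ _ := mul_le_mul_right hHold 2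
  have hL_ne_top : L ≠ ⊤ := (lt_of_le_of_lt hLR hR_ne_top.lt_top).ne
  -- each B-term is fine
  have hBi_meas : ∀ i : Fin r, AEStronglyMeasurable
      (fun t => ‖B i t (y t) - B i t (z t)‖ ^ 2) μ := fun i =>
    (((hmeas2 i).sub (hmeas3 i)).norm.aemeasurable.pow_const 2).aestronglyMeasurable
  have hBi_le : ∀ i : Fin r, ∀ t, ‖B i t (y t) - B i t (z t)‖ ^ 2 ≤ S t := by
    intro i t
    exact Finset.single_le_sum (f := fun j => ‖B j t (y t) - B j t (z t)‖ ^ 2)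
      (fun j _ => pow_nonneg (norm_nonneg _) 2) (Finset.mem_univ i)
  have hBi_lint : ∀ i : Fin r,
      ∫⁻ t, ENNReal.ofReal (‖B i t (y t) - B i t (z t)‖ ^ 2) ∂μ ≤ L := by
    intro i
    apply lintegral_mono
    intro t
    exact ENNReal.ofReal_le_ofReal (hBi_le i t)
  have hBi_int : ∀ i : Fin r, Integrable (fun t => ‖B i t (y t) - B i t (z t)‖ ^ 2) μ := by
    intro i
    refine ⟨hBi_meas i, ?_⟩
    rw [hasFiniteIntegral_iff_ofReal (ae_of_all _ fun t => pow_nonneg (norm_nonneg _) 2)]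
    exact lt_of_le_of_lt (hBi_lint i) hL_ne_top.lt_top
  -- the LHS equals L.toReal
  have hLHS : ∑ i, ∫ t in Set.Ioc 0 T, ‖B i t (y t) - B i t (z t)‖ ^ 2 = L.toReal := by
    have e1 : ∀ i : Fin r, ∫ t in Set.Ioc 0 T, ‖B i t (y t) - B i t (z t)‖ ^ 2
        = (∫⁻ t, ENNReal.ofReal (‖B i t (y t) - B i t (z t)‖ ^ 2) ∂μ).toReal := fun i =>
      integral_eq_lintegral_of_nonneg_ae (ae_of_all _ fun t => pow_nonneg (norm_nonneg _) 2)
        (hBi_meas i)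
    rw [Finset.sum_congr rfl fun i _ => e1 i]
    rw [← ENNReal.toReal_sum (fun i _ => (lt_of_le_of_lt (hBi_lint i) hL_ne_top.lt_top).ne)]
    congr 1
    rw [hL]
    have hmm : ∀ i : Fin r, AEMeasurable
        (fun t => ENNReal.ofReal (‖B i t (y t) - B i t (z t)‖ ^ 2)) μ := fun i =>
      (((hmeas2 i).sub (hmeas3 i)).norm.aemeasurable.pow_const 2).ennreal_ofReal
    rw [← lintegral_finset_sum' Finset.univ (fun i _ => hmm i)]
    apply lintegral_congr_ae
    filter_upwards with t
    rw [hS]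
    rw [ENNReal.ofReal_sum_of_nonneg (fun i _ => pow_nonneg (norm_nonneg _) 2)]
  -- finish
  rw [hLHS]
  have hfinal : L.toReal ≤ R.toReal := ENNReal.toReal_mono hR_ne_top hLR
  refine hfinal.trans (le_of_eq ?_)
  rw [hR]
  rw [ENNReal.toReal_mul, ENNReal.toReal_mul, ← ENNReal.toReal_rpow, ← ENNReal.toReal_rpow,
    ENNReal.toReal_ofReal hI₁_nonneg, ENNReal.toReal_ofReal (mul_nonneg h2qnn hI₂_nonneg)]
  norm_num [mul_assoc]
end
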